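/- arXiv:2311.13461 — 11 statements merged into one kernel-verified Lean document; each statement's English description precedes it below -/
import Mathlib

section
/- Let σ > 0, and let φ, η, F : ℝ → ℝ be continuously differentiable with F(x) > 0, W[φ,η](x) ≠ 0 and W[φ,F](x) ≠ 0 for all x. Let h : ℝ → ℝ be continuous such that ∫_x^∞ 2h(s)φ(s)F(s)/(σ² W[φ,η](s)) ds converges absolutely for every x. Then, writing φ̂ = φ/F and η̂ = η/F, for every x ∈ ℝ: (W[φ̂, η̂](x) / W[φ̂, 1](x)) · ∫_x^∞ 2h(s)φ̂(s)/(σ² W[φ̂, η̂](s)) ds = (W[φ,η](x) / W[φ,F](x)) · ∫_x^∞ 2h(s)φ(s)F(s)/(σ² W[φ,η](s)) ds. -/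
open MeasureTheory Set

/-- Gittins' index under change of probability measure: the index formula written
through the transformed solutions `φ̂ = φ/F`, `η̂ = η/F` equals the formula written
through the original solutions `φ, η` and the positive function `F`. -/
theorem stmt4
    (σ : ℝ) (hσ : 0 < σ)
    (φ η F : ℝ → ℝ)
    (hφ : ContDiff ℝ 1 φ) (hη : ContDiff ℝ 1 η) (hF : ContDiff ℝ 1 F)
    (hFpos : ∀ x, 0 < F x)
    (hWφη : ∀ x, φ x * deriv η x - η x * deriv φ x ≠ 0)
    (hWφF : ∀ x, φ x * deriv F x - F x * deriv φ x ≠ 0)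
    (h : ℝ → ℝ) (hh : Continuous h)
    (hint : ∀ x, IntegrableOn
      (fun s => 2 * h s * φ s * F s / (σ ^ 2 * (φ s * deriv η s - η s * deriv φ s)))
      (Ioi x)) :
    ∀ x,
      ((fun y => φ y / F y) x * deriv (fun y => η y / F y) x
          - (fun y => η y / F y) x * deriv (fun y => φ y / F y) x) /
        ((fun y => φ y / F y) x * deriv (fun _ : ℝ => (1 : ℝ)) x
          - 1 * deriv (fun y => φ y / F y) x) *
        (∫ s in Ioi x,
          2 * h s * (φ s / F s) /
            (σ ^ 2 * ((fun y => φ y / F y) s * deriv (fun y => η y / F y) s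
              - (fun y => η y / F y) s * deriv (fun y => φ y / F y) s)))
      =
      (φ x * deriv η x - η x * deriv φ x) /
        (φ x * deriv F x - F x * deriv φ x) *
        (∫ s in Ioi x,
          2 * h s * φ s * F s / (σ ^ 2 * (φ s * deriv η s - η s * deriv φ s))) := by
  have hFne : ∀ y, F y ≠ 0 := fun y => (hFpos y).ne'
  have hd : ∀ (f : ℝ → ℝ), ContDiff ℝ 1 f → ∀ y,
      deriv (fun z => f z / F z) y = (deriv f y * F y - f y * deriv F y) / F y ^ 2 := by
    intro f hf y
    exact deriv_div (hf.differentiable one_ne_zero y) (hF.differentiable one_ne_zero y) (hFne y)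
  intro x
  have hint2 : (∫ s in Ioi x,
      2 * h s * (φ s / F s) /
        (σ ^ 2 * ((fun y => φ y / F y) s * deriv (fun y => η y / F y) s
          - (fun y => η y / F y) s * deriv (fun y => φ y / F y) s)))
      = ∫ s in Ioi x,
          2 * h s * φ s * F s / (σ ^ 2 * (φ s * deriv η s - η s * deriv φ s)) := by
    refine setIntegral_congr_fun measurableSet_Ioi fun s _ => ?_
    simp only [hd η hη, hd φ hφ]
    have h0 := hFne s
    have h1 := hWφη s
    have h2 : σ ^ 2 ≠ 0 := pow_ne_zero 2 hσ.ne'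
    have key : (φ s / F s * ((deriv η s * F s - η s * deriv F s) / F s ^ 2)
        - η s / F s * ((deriv φ s * F s - φ s * deriv F s) / F s ^ 2))
        = (φ s * deriv η s - η s * deriv φ s) / F s ^ 2 := by
      field_simp
      ring
    rw [key]
    rw [div_eq_div_iff (by positivity) (mul_ne_zero h2 h1)]
    field_simp
  rw [hint2]
  congr 1
  simp only [hd η hη, hd φ hφ, deriv_const', mul_zero, zero_sub, one_mul]
  have h0 := hFne x
  have h3 : deriv φ x * F x - φ x * deriv F x ≠ 0 := fun hc => hWφF x (by linarith)
  have key : (φ x / F x * ((deriv η x * F x - η x * deriv F x) / F x ^ 2)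
      - η x / F x * ((deriv φ x * F x - φ x * deriv F x) / F x ^ 2))
      = (φ x * deriv η x - η x * deriv φ x) / F x ^ 2 := by
    field_simp
    ring
  rw [key]
  rw [div_eq_div_iff (neg_ne_zero.2 (div_ne_zero h3 (pow_ne_zero 2 h0))) (hWφF x)]
  field_simp
  ring
end

section
/- Let σ > 0, α > 0, Γ > 0, and let h : ℝ → ℝ be continuous and bounded. Set A = √(2Γ)/σ and B = √(2(α+Γ))/σ (so that 0 < B − A). Then for every x ∈ ℝ: (2e^{Bx} / ((B+A)e^{Ax} + (B−A)e^{−Ax})) · ∫_x^∞ (2/σ²) h(s) e^{−Bs} cosh(As) ds = ρ₋(x) S₋(x) + ρ₊(x) S₊(x), where ρ₊(x) = 2/(2α + σ²(B+A)² e^{2Ax}), ρ₋(x) = 2/(2α + σ²(B−A)² e^{−2Ax}), S₊(x) = ∫_0^∞ h(x + s/(B+A)) e^{−s} ds, and S₋(x) = ∫_0^∞ h(x + s/(B−A)) e^{−s} ds. -/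
open MeasureTheory Set Real

lemma intgOn (h : ℝ → ℝ) (hh : Continuous h) {C : ℝ} (hC : ∀ x, |h x| ≤ C)
    {c : ℝ} (hc : 0 < c) (x : ℝ) :
    IntegrableOn (fun s => h s * Real.exp (-(c * s))) (Ioi x) := by
  apply Integrable.mono' ((exp_neg_integrableOn_Ioi x hc).const_mul C)
  · exact ((hh.mul (by continuity)).aestronglyMeasurable).restrict
  · filter_upwards with s
    rw [norm_mul, Real.norm_eq_abs, Real.norm_eq_abs, abs_of_pos (Real.exp_pos _), neg_mul]
    exact mul_le_mul_of_nonneg_right (hC s) (Real.exp_pos _).le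

lemma shiftIoi (F : ℝ → ℝ) (x : ℝ) :
    ∫ u in Ioi (0:ℝ), F (x + u) = ∫ s in Ioi x, F s := by
  rw [← integral_indicator measurableSet_Ioi, ← integral_indicator measurableSet_Ioi]
  rw [show (Ioi (0:ℝ)).indicator (fun u => F (x + u)) = fun u => (Ioi x).indicator F (x + u) by
    ext u
    by_cases hu : u ∈ Ioi (0:ℝ)
    · rw [indicator_of_mem hu, indicator_of_mem (by simp at hu ⊢; linarith)]
    · rw [indicator_of_notMem hu, indicator_of_notMem (by simp at hu ⊢; linarith)]]
  exact integral_add_left_eq_self (μ := volume) ((Ioi x).indicator F) x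

lemma subst (h : ℝ → ℝ) {c : ℝ} (hc : 0 < c) (x : ℝ) :
    ∫ s in Ioi (0:ℝ), h (x + s / c) * Real.exp (-s)
      = c * Real.exp (c * x) * ∫ s in Ioi x, h s * Real.exp (-(c * s)) := by
  have key : ∀ s : ℝ, h (x + s / c) * Real.exp (-s)
      = (fun v => h (x + v) * Real.exp (-(c * v))) (c⁻¹ * s) := by
    intro s
    simp only []
    rw [mul_comm c⁻¹ s, ← div_eq_mul_inv, mul_div_cancel₀ _ hc.ne']
  have pw : ∀ v : ℝ, h (x + v) * Real.exp (-(c * v))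
      = Real.exp (c * x) * ((fun s => h s * Real.exp (-(c * s))) (x + v)) := by
    intro v
    simp only []
    rw [← mul_assoc, mul_comm (Real.exp (c*x)) (h (x+v)), mul_assoc, ← Real.exp_add]
    ring_nf
  calc ∫ s in Ioi (0:ℝ), h (x + s / c) * Real.exp (-s)
      = ∫ s in Ioi (0:ℝ), (fun v => h (x + v) * Real.exp (-(c * v))) (c⁻¹ * s) := by
        simp_rw [key]
    _ = (c⁻¹)⁻¹ • ∫ v in Ioi (c⁻¹ * 0), h (x + v) * Real.exp (-(c * v)) := by
        exact integral_comp_mul_left_Ioi (fun v => h (x + v) * Real.exp (-(c * v))) 0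
          (inv_pos.mpr hc)
    _ = c * ∫ v in Ioi (0:ℝ), h (x + v) * Real.exp (-(c * v)) := by
        rw [inv_inv, mul_zero, smul_eq_mul]
    _ = c * ∫ v in Ioi (0:ℝ), Real.exp (c * x) *
          ((fun s => h s * Real.exp (-(c * s))) (x + v)) := by
        simp_rw [pw]
    _ = c * (Real.exp (c * x) *
          ∫ v in Ioi (0:ℝ), (fun s => h s * Real.exp (-(c * s))) (x + v)) := by
        rw [integral_const_mul]
    _ = c * Real.exp (c * x) * ∫ s in Ioi x, h s * Real.exp (-(c * s)) := by
        rw [shiftIoi (fun s => h s * Real.exp (-(c * s))) x, mul_assoc]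

/-- Gittins' index of the super-diffusive (DMPS) process: the change-of-measure
formula equals the explicit closed form `ρ₋S₋ + ρ₊S₊`. -/
theorem stmt6
    (σ α Γ : ℝ) (hσ : 0 < σ) (hα : 0 < α) (hΓ : 0 < Γ)
    (h : ℝ → ℝ) (hh : Continuous h) (hhb : ∃ C, ∀ x, |h x| ≤ C)
    (A B : ℝ)
    (hA : A = Real.sqrt (2 * Γ) / σ)
    (hB : B = Real.sqrt (2 * (α + Γ)) / σ) :
    0 < B - A ∧
      ∀ x,
        (2 * Real.exp (B * x) /
            ((B + A) * Real.exp (A * x) + (B - A) * Real.exp (-A * x))) *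
          (∫ s in Ioi x, (2 / σ ^ 2) * h s * Real.exp (-B * s) * Real.cosh (A * s))
        =
        (2 / (2 * α + σ ^ 2 * (B - A) ^ 2 * Real.exp (-2 * A * x))) *
            (∫ s in Ioi (0 : ℝ), h (x + s / (B - A)) * Real.exp (-s))
        + (2 / (2 * α + σ ^ 2 * (B + A) ^ 2 * Real.exp (2 * A * x))) *
            (∫ s in Ioi (0 : ℝ), h (x + s / (B + A)) * Real.exp (-s)) := by
  obtain ⟨C, hC⟩ := hhb
  have hA0 : 0 < A := by
    rw [hA]; exact div_pos (Real.sqrt_pos.mpr (by linarith)) hσ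
  have hBA : A < B := by
    rw [hA, hB]
    exact (div_lt_div_iff_of_pos_right hσ).mpr (Real.sqrt_lt_sqrt (by positivity) (by linarith))
  have hc1 : 0 < B - A := by linarith
  have hc2 : 0 < B + A := by linarith
  have hA2 : A ^ 2 = 2 * Γ / σ ^ 2 := by
    rw [hA, div_pow, Real.sq_sqrt (by positivity)]
  have hB2 : B ^ 2 = 2 * (α + Γ) / σ ^ 2 := by
    rw [hB, div_pow, Real.sq_sqrt (by positivity)]
  have h2a : σ ^ 2 * ((B + A) * (B - A)) = 2 * α := by
    have e : (B + A) * (B - A) = B ^ 2 - A ^ 2 := by ring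
    rw [e, hA2, hB2]
    field_simp
    ring
  refine ⟨hc1, fun x => ?_⟩
  -- split the LHS integral
  have hsplit : (∫ s in Ioi x, (2 / σ ^ 2) * h s * Real.exp (-B * s) * Real.cosh (A * s))
      = (1 / σ ^ 2) * (∫ s in Ioi x, h s * Real.exp (-((B - A) * s)))
        + (1 / σ ^ 2) * (∫ s in Ioi x, h s * Real.exp (-((B + A) * s))) := by
    rw [← integral_const_mul, ← integral_const_mul,
      ← integral_add ((intgOn h hh hC hc1 x).const_mul _) ((intgOn h hh hC hc2 x).const_mul _)]
    apply setIntegral_congr_fun measurableSet_Ioi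
    intro s _
    have e1 : Real.exp (-((B - A) * s)) = Real.exp (-B * s) * Real.exp (A * s) := by
      rw [← Real.exp_add]; congr 1; ring
    have e2 : Real.exp (-((B + A) * s)) = Real.exp (-B * s) * Real.exp (-(A * s)) := by
      rw [← Real.exp_add]; congr 1; ring
    simp only [Real.cosh_eq, e1, e2]
    ring
  rw [hsplit, subst h hc1 x, subst h hc2 x]
  -- exponential bookkeeping
  have hvu : Real.exp (-A * x) * Real.exp (A * x) = 1 := by
    rw [← Real.exp_add, show -A * x + A * x = 0 by ring, Real.exp_zero]
  have hv2 : Real.exp (-2 * A * x) = Real.exp (-A * x) * Real.exp (-A * x) := by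
    rw [← Real.exp_add]; congr 1; ring
  have hu2 : Real.exp (2 * A * x) = Real.exp (A * x) * Real.exp (A * x) := by
    rw [← Real.exp_add]; congr 1; ring
  have hw1 : Real.exp ((B - A) * x) = Real.exp (B * x) * Real.exp (-A * x) := by
    rw [← Real.exp_add]; congr 1; ring
  have hw2 : Real.exp ((B + A) * x) = Real.exp (B * x) * Real.exp (A * x) := by
    rw [← Real.exp_add]; congr 1; ring
  set D := (B + A) * Real.exp (A * x) + (B - A) * Real.exp (-A * x) with hD
  have hDpos : 0 < D :=
    add_pos (mul_pos hc2 (Real.exp_pos _)) (mul_pos hc1 (Real.exp_pos _))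
  have hden1 : 2 * α + σ ^ 2 * (B - A) ^ 2 * Real.exp (-2 * A * x)
      = σ ^ 2 * (B - A) * Real.exp (-A * x) * D := by
    rw [hv2, hD]
    linear_combination (-h2a) - (σ ^ 2 * (B + A) * (B - A)) * hvu
  have hden2 : 2 * α + σ ^ 2 * (B + A) ^ 2 * Real.exp (2 * A * x)
      = σ ^ 2 * (B + A) * Real.exp (A * x) * D := by
    rw [hu2, hD]
    linear_combination (-h2a) - (σ ^ 2 * (B + A) * (B - A)) * hvu
  have eq1 : 2 * Real.exp (B * x) / D * (1 / σ ^ 2)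
      = 2 / (2 * α + σ ^ 2 * (B - A) ^ 2 * Real.exp (-2 * A * x))
          * ((B - A) * Real.exp ((B - A) * x)) := by
    rw [hden1, hw1]
    field_simp
  have eq2 : 2 * Real.exp (B * x) / D * (1 / σ ^ 2)
      = 2 / (2 * α + σ ^ 2 * (B + A) ^ 2 * Real.exp (2 * A * x))
          * ((B + A) * Real.exp ((B + A) * x)) := by
    rw [hden2, hw2]
    field_simp
  linear_combination (∫ s in Ioi x, h s * Real.exp (-((B - A) * s))) * eq1
    + (∫ s in Ioi x, h s * Real.exp (-((B + A) * s))) * eq2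
end

section
/- Let σ > 0 and Γ > 0, and define for t > 0 and x ∈ ℝ the density P(x,t) = (1/(2√(2πσ²t))) [ e^{−(x − σ√(2Γ)t)²/(2σ²t)} + e^{−(x + σ√(2Γ)t)²/(2σ²t)} ]. Then P satisfies, for all t > 0 and x ∈ ℝ, the Fokker–Planck equation ∂_t P(x,t) = −∂_x[ σ√(2Γ) tanh(√(2Γ)x/σ) P(x,t) ] + (σ²/2) ∂_{xx} P(x,t). -/
lemma had_time (σ μ x t : ℝ) (hσ : 0 < σ) (ht : 0 < t) :
    HasDerivAt
      (fun τ => (1 / (2 * Real.sqrt (2 * Real.pi * σ ^ 2 * τ))) *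
        Real.exp (-(x - μ * τ) ^ 2 / (2 * σ ^ 2 * τ)))
      ((1 / (2 * Real.sqrt (2 * Real.pi * σ ^ 2 * t))) *
        Real.exp (-(x - μ * t) ^ 2 / (2 * σ ^ 2 * t)) *
        (-(1 / (2 * t)) + μ * (x - μ * t) / (σ ^ 2 * t)
          + (x - μ * t) ^ 2 / (2 * σ ^ 2 * t ^ 2))) t := by
  have hπ := Real.pi_pos
  have hkt : 0 < 2 * Real.pi * σ ^ 2 * t := by positivity
  have hS : 0 < Real.sqrt (2 * Real.pi * σ ^ 2 * t) := Real.sqrt_pos.2 hkt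
  have hS2 : Real.sqrt (2 * Real.pi * σ ^ 2 * t) ^ 2 = 2 * Real.pi * σ ^ 2 * t :=
    Real.sq_sqrt hkt.le
  have hsqrt : HasDerivAt (fun τ => Real.sqrt (2 * Real.pi * σ ^ 2 * τ))
      ((2 * Real.pi * σ ^ 2) / (2 * Real.sqrt (2 * Real.pi * σ ^ 2 * t))) t := by
    have h := (Real.hasDerivAt_sqrt (x := 2 * Real.pi * σ ^ 2 * t) hkt.ne').comp t
      ((hasDerivAt_id t).const_mul (2 * Real.pi * σ ^ 2))
    refine h.congr_deriv ?_
    simp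
    ring
  have hc : HasDerivAt (fun τ => 1 / (2 * Real.sqrt (2 * Real.pi * σ ^ 2 * τ)))
      (-(1 / (2 * Real.sqrt (2 * Real.pi * σ ^ 2 * t))) / (2 * t)) t := by
    have h := (hasDerivAt_const t (1 : ℝ)).div (hsqrt.const_mul 2) (by positivity)
    refine h.congr_deriv ?_
    rw [mul_pow, hS2]
    field_simp
    ring
  have hnum : HasDerivAt (fun τ : ℝ => -(x - μ * τ) ^ 2) (2 * μ * (x - μ * t)) t := by
    have h := (((hasDerivAt_const t x).sub ((hasDerivAt_id t).const_mul μ)).pow 2).neg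
    refine h.congr_deriv ?_
    simp
    ring
  have hden : HasDerivAt (fun τ : ℝ => 2 * σ ^ 2 * τ) (2 * σ ^ 2) t := by
    simpa using (hasDerivAt_id t).const_mul (2 * σ ^ 2)
  have hexp : HasDerivAt (fun τ : ℝ => -(x - μ * τ) ^ 2 / (2 * σ ^ 2 * τ))
      (μ * (x - μ * t) / (σ ^ 2 * t) + (x - μ * t) ^ 2 / (2 * σ ^ 2 * t ^ 2)) t := by
    have h := hnum.div hden (by positivity)
    refine h.congr_deriv ?_
    field_simp
    ring
  have h := hc.mul hexp.exp
  refine h.congr_deriv ?_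
  ring

lemma had_gauss (c m s x : ℝ) :
    HasDerivAt (fun y => c * Real.exp (-(y - m) ^ 2 / s))
      (c * Real.exp (-(x - m) ^ 2 / s) * (-(2 * (x - m)) / s)) x := by
  have h1 : HasDerivAt (fun y : ℝ => -(y - m) ^ 2 / s) (-(2 * (x - m)) / s) x := by
    have h := (((hasDerivAt_id x).sub_const m).pow 2).neg.div_const s
    refine h.congr_deriv ?_
    simp
  have h2 := h1.exp.const_mul c
  refine h2.congr_deriv ?_
  ring

lemma had_gauss2 (c m s x : ℝ) :
    HasDerivAt (fun y => c * Real.exp (-(y - m) ^ 2 / s) * (-(2 * (y - m)) / s))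
      (c * Real.exp (-(x - m) ^ 2 / s) * ((-(2 * (x - m)) / s) ^ 2 + -2 / s)) x := by
  have h1 := had_gauss c m s x
  have h2 : HasDerivAt (fun y : ℝ => -(2 * (y - m)) / s) (-2 / s) x := by
    have h := (((hasDerivAt_id x).sub_const m).const_mul 2).neg.div_const s
    refine h.congr_deriv ?_
    ring
  have h3 := h1.mul h2
  refine h3.congr_deriv ?_
  ring

lemma tanh_key (σ Γ t y : ℝ) (hσ : 0 < σ) (hΓ : 0 < Γ) (ht : 0 < t) :
    Real.tanh (Real.sqrt (2 * Γ) * y / σ) *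
      (Real.exp (-(y - σ * Real.sqrt (2 * Γ) * t) ^ 2 / (2 * σ ^ 2 * t))
        + Real.exp (-(y + σ * Real.sqrt (2 * Γ) * t) ^ 2 / (2 * σ ^ 2 * t)))
    = Real.exp (-(y - σ * Real.sqrt (2 * Γ) * t) ^ 2 / (2 * σ ^ 2 * t))
        - Real.exp (-(y + σ * Real.sqrt (2 * Γ) * t) ^ 2 / (2 * σ ^ 2 * t)) := by
  have hb2 : Real.sqrt (2 * Γ) ^ 2 = 2 * Γ := Real.sq_sqrt (by positivity)
  have e1 : Real.exp (-(y - σ * Real.sqrt (2 * Γ) * t) ^ 2 / (2 * σ ^ 2 * t))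
      = Real.exp (-y ^ 2 / (2 * σ ^ 2 * t) - Γ * t) *
        Real.exp (Real.sqrt (2 * Γ) * y / σ) := by
    rw [← Real.exp_add]
    congr 1
    have expand : -(y - σ * Real.sqrt (2 * Γ) * t) ^ 2
        = -y ^ 2 + 2 * σ * Real.sqrt (2 * Γ) * t * y - σ ^ 2 * (2 * Γ) * t ^ 2 := by
      linear_combination (-(σ ^ 2 * t ^ 2)) * hb2
    rw [expand]
    field_simp
    ring
  have e2 : Real.exp (-(y + σ * Real.sqrt (2 * Γ) * t) ^ 2 / (2 * σ ^ 2 * t))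
      = Real.exp (-y ^ 2 / (2 * σ ^ 2 * t) - Γ * t) *
        Real.exp (-(Real.sqrt (2 * Γ) * y / σ)) := by
    rw [← Real.exp_add]
    congr 1
    have expand : -(y + σ * Real.sqrt (2 * Γ) * t) ^ 2
        = -y ^ 2 - 2 * σ * Real.sqrt (2 * Γ) * t * y - σ ^ 2 * (2 * Γ) * t ^ 2 := by
      linear_combination (-(σ ^ 2 * t ^ 2)) * hb2
    rw [expand]
    field_simp
    ring
  rw [e1, e2, Real.tanh_eq_sinh_div_cosh, Real.sinh_eq, Real.cosh_eq]
  have hpos : 0 < Real.exp (Real.sqrt (2 * Γ) * y / σ)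
      + Real.exp (-(Real.sqrt (2 * Γ) * y / σ)) := by positivity
  field_simp


/-- The two-Gaussian mixture density of the DMPS process satisfies the
Fokker–Planck equation with drift `σ√(2Γ)tanh(√(2Γ)x/σ)`. -/
theorem stmt10
    (σ Γ : ℝ) (hσ : 0 < σ) (hΓ : 0 < Γ)
    (P : ℝ → ℝ → ℝ)
    (hP : ∀ x t, P x t =
      (1 / (2 * Real.sqrt (2 * Real.pi * σ ^ 2 * t))) *
        (Real.exp (-(x - σ * Real.sqrt (2 * Γ) * t) ^ 2 / (2 * σ ^ 2 * t))
          + Real.exp (-(x + σ * Real.sqrt (2 * Γ) * t) ^ 2 / (2 * σ ^ 2 * t)))) :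
    ∀ t, 0 < t → ∀ x,
      deriv (fun τ => P x τ) t
        = -(deriv (fun y =>
              σ * Real.sqrt (2 * Γ) * Real.tanh (Real.sqrt (2 * Γ) * y / σ) * P y t) x)
          + σ ^ 2 / 2 * deriv (deriv (fun y => P y t)) x := by
  intro t ht x
  have hπ := Real.pi_pos
  -- Time derivative
  have h1 : deriv (fun τ => P x τ) t
      = (1 / (2 * Real.sqrt (2 * Real.pi * σ ^ 2 * t))) *
          Real.exp (-(x - σ * Real.sqrt (2 * Γ) * t) ^ 2 / (2 * σ ^ 2 * t)) *
          (-(1 / (2 * t)) + σ * Real.sqrt (2 * Γ) * (x - σ * Real.sqrt (2 * Γ) * t) / (σ ^ 2 * t)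
            + (x - σ * Real.sqrt (2 * Γ) * t) ^ 2 / (2 * σ ^ 2 * t ^ 2))
        + (1 / (2 * Real.sqrt (2 * Real.pi * σ ^ 2 * t))) *
          Real.exp (-(x + σ * Real.sqrt (2 * Γ) * t) ^ 2 / (2 * σ ^ 2 * t)) *
          (-(1 / (2 * t)) + -(σ * Real.sqrt (2 * Γ)) * (x + σ * Real.sqrt (2 * Γ) * t) / (σ ^ 2 * t)
            + (x + σ * Real.sqrt (2 * Γ) * t) ^ 2 / (2 * σ ^ 2 * t ^ 2)) := by
    have hA := had_time σ (σ * Real.sqrt (2 * Γ)) x t hσ ht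
    have hB := had_time σ (-(σ * Real.sqrt (2 * Γ))) x t hσ ht
    simp only [show ∀ τ : ℝ, x - -(σ * Real.sqrt (2 * Γ)) * τ = x + σ * Real.sqrt (2 * Γ) * τ
      from fun τ => by ring] at hB
    exact ((hA.add hB).congr_of_eventuallyEq
      (Filter.Eventually.of_forall fun τ => by rw [hP, Pi.add_apply]; ring)).deriv
  -- Drift term derivative
  have h2 : deriv (fun y =>
        σ * Real.sqrt (2 * Γ) * Real.tanh (Real.sqrt (2 * Γ) * y / σ) * P y t) x
      = σ * Real.sqrt (2 * Γ) * (1 / (2 * Real.sqrt (2 * Real.pi * σ ^ 2 * t))) *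
          Real.exp (-(x - σ * Real.sqrt (2 * Γ) * t) ^ 2 / (2 * σ ^ 2 * t)) *
          (-(2 * (x - σ * Real.sqrt (2 * Γ) * t)) / (2 * σ ^ 2 * t))
        - σ * Real.sqrt (2 * Γ) * (1 / (2 * Real.sqrt (2 * Real.pi * σ ^ 2 * t))) *
          Real.exp (-(x + σ * Real.sqrt (2 * Γ) * t) ^ 2 / (2 * σ ^ 2 * t)) *
          (-(2 * (x + σ * Real.sqrt (2 * Γ) * t)) / (2 * σ ^ 2 * t)) := by
    have hA := had_gauss (σ * Real.sqrt (2 * Γ) * (1 / (2 * Real.sqrt (2 * Real.pi * σ ^ 2 * t))))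
      (σ * Real.sqrt (2 * Γ) * t) (2 * σ ^ 2 * t) x
    have hB := had_gauss (σ * Real.sqrt (2 * Γ) * (1 / (2 * Real.sqrt (2 * Real.pi * σ ^ 2 * t))))
      (-(σ * Real.sqrt (2 * Γ) * t)) (2 * σ ^ 2 * t) x
    simp only [show ∀ y : ℝ, y - -(σ * Real.sqrt (2 * Γ) * t) = y + σ * Real.sqrt (2 * Γ) * t
      from fun y => by ring] at hB
    refine ((hA.sub hB).congr_of_eventuallyEq
      (Filter.Eventually.of_forall fun y => ?_)).deriv
    rw [hP, Pi.sub_apply]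
    have hk := tanh_key σ Γ t y hσ hΓ ht
    linear_combination (σ * Real.sqrt (2 * Γ) *
      (1 / (2 * Real.sqrt (2 * Real.pi * σ ^ 2 * t)))) * hk
  -- First spatial derivative as a function
  have hD1 : deriv (fun y => P y t)
      = fun y => (1 / (2 * Real.sqrt (2 * Real.pi * σ ^ 2 * t))) *
          Real.exp (-(y - σ * Real.sqrt (2 * Γ) * t) ^ 2 / (2 * σ ^ 2 * t)) *
          (-(2 * (y - σ * Real.sqrt (2 * Γ) * t)) / (2 * σ ^ 2 * t))
        + (1 / (2 * Real.sqrt (2 * Real.pi * σ ^ 2 * t))) *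
          Real.exp (-(y + σ * Real.sqrt (2 * Γ) * t) ^ 2 / (2 * σ ^ 2 * t)) *
          (-(2 * (y + σ * Real.sqrt (2 * Γ) * t)) / (2 * σ ^ 2 * t)) := by
    funext y
    have hA := had_gauss (1 / (2 * Real.sqrt (2 * Real.pi * σ ^ 2 * t)))
      (σ * Real.sqrt (2 * Γ) * t) (2 * σ ^ 2 * t) y
    have hB := had_gauss (1 / (2 * Real.sqrt (2 * Real.pi * σ ^ 2 * t)))
      (-(σ * Real.sqrt (2 * Γ) * t)) (2 * σ ^ 2 * t) y
    simp only [show ∀ z : ℝ, z - -(σ * Real.sqrt (2 * Γ) * t) = z + σ * Real.sqrt (2 * Γ) * t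
      from fun z => by ring] at hB
    exact ((hA.add hB).congr_of_eventuallyEq
      (Filter.Eventually.of_forall fun z => by rw [hP, Pi.add_apply]; ring)).deriv
  rw [hD1]
  -- Second spatial derivative
  have h3 : deriv (fun y => (1 / (2 * Real.sqrt (2 * Real.pi * σ ^ 2 * t))) *
          Real.exp (-(y - σ * Real.sqrt (2 * Γ) * t) ^ 2 / (2 * σ ^ 2 * t)) *
          (-(2 * (y - σ * Real.sqrt (2 * Γ) * t)) / (2 * σ ^ 2 * t))
        + (1 / (2 * Real.sqrt (2 * Real.pi * σ ^ 2 * t))) *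
          Real.exp (-(y + σ * Real.sqrt (2 * Γ) * t) ^ 2 / (2 * σ ^ 2 * t)) *
          (-(2 * (y + σ * Real.sqrt (2 * Γ) * t)) / (2 * σ ^ 2 * t))) x
      = (1 / (2 * Real.sqrt (2 * Real.pi * σ ^ 2 * t))) *
          Real.exp (-(x - σ * Real.sqrt (2 * Γ) * t) ^ 2 / (2 * σ ^ 2 * t)) *
          ((-(2 * (x - σ * Real.sqrt (2 * Γ) * t)) / (2 * σ ^ 2 * t)) ^ 2 + -2 / (2 * σ ^ 2 * t))
        + (1 / (2 * Real.sqrt (2 * Real.pi * σ ^ 2 * t))) *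
          Real.exp (-(x + σ * Real.sqrt (2 * Γ) * t) ^ 2 / (2 * σ ^ 2 * t)) *
          ((-(2 * (x + σ * Real.sqrt (2 * Γ) * t)) / (2 * σ ^ 2 * t)) ^ 2 + -2 / (2 * σ ^ 2 * t)) := by
    have hA := had_gauss2 (1 / (2 * Real.sqrt (2 * Real.pi * σ ^ 2 * t)))
      (σ * Real.sqrt (2 * Γ) * t) (2 * σ ^ 2 * t) x
    have hB := had_gauss2 (1 / (2 * Real.sqrt (2 * Real.pi * σ ^ 2 * t)))
      (-(σ * Real.sqrt (2 * Γ) * t)) (2 * σ ^ 2 * t) x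
    simp only [show ∀ z : ℝ, z - -(σ * Real.sqrt (2 * Γ) * t) = z + σ * Real.sqrt (2 * Γ) * t
      from fun z => by ring] at hB
    exact (hA.add hB).deriv
  rw [h1, h2, h3]
  field_simp
  ring
end

section
/- Let a, b, c be real numbers with 0 < a < b < c, and let u > 0. Then ((c−b)/(b−a)) · e^{−(c−a)u} ≤ (e^{−bu} − e^{−cu}) / (e^{−au} − e^{−bu}) ≤ (c−b)/(b−a). -/
/-
By convexity (`1 + t ≤ exp t`), a secant of `exp` has slope between the values of `exp` at its
endpoints. Applied to `x ↦ e^{-xu}`, the numerator `e^{-bu} - e^{-cu}` lies between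
`u e^{-cu} (c - b)` and `u e^{-bu} (c - b)`, the denominator `e^{-au} - e^{-bu}` between
`u e^{-bu} (b - a)` and `u e^{-au} (b - a)`. Pairing the bounds one way gives the upper estimate;
the other way gives the lower one, with `e^{-cu} / e^{-au} = e^{-(c - a) u}`.
-/

open Real

lemma exp_mul_sub_le_exp_sub_exp (x y : ℝ) : exp y * (x - y) ≤ exp x - exp y := by
  have hx : exp x = exp y * exp (x - y) := by rw [← exp_add, add_sub_cancel]
  nlinarith [add_one_le_exp (x - y), exp_pos y]

lemma exp_sub_exp_le_exp_mul_sub (x y : ℝ) : exp x - exp y ≤ exp x * (x - y) := by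
  have hy : exp y = exp x * exp (-(x - y)) := by rw [← exp_add]; ring_nf
  nlinarith [add_one_le_exp (-(x - y)), exp_pos x]

lemma exp_neg_mul_sub_exp_neg_mul_bounds (s t u : ℝ) :
    exp (-t * u) * ((t - s) * u) ≤ exp (-s * u) - exp (-t * u) ∧
      exp (-s * u) - exp (-t * u) ≤ exp (-s * u) * ((t - s) * u) := by
  have h : -s * u - -t * u = (t - s) * u := by ring
  exact ⟨h ▸ exp_mul_sub_le_exp_sub_exp _ _, h ▸ exp_sub_exp_le_exp_mul_sub _ _⟩

theorem stmt12_general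
    (a b c u : ℝ) (hab : a < b) (hbc : b < c) (hu : 0 < u) :
    (c - b) / (b - a) * Real.exp (-(c - a) * u)
        ≤ (Real.exp (-b * u) - Real.exp (-c * u)) /
            (Real.exp (-a * u) - Real.exp (-b * u)) ∧
      (Real.exp (-b * u) - Real.exp (-c * u)) /
          (Real.exp (-a * u) - Real.exp (-b * u))
        ≤ (c - b) / (b - a) := by
  have hba : 0 < b - a := sub_pos.2 hab
  have hcb : 0 < c - b := sub_pos.2 hbc
  obtain ⟨hnum_lo, hnum_hi⟩ := exp_neg_mul_sub_exp_neg_mul_bounds b c u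
  obtain ⟨hden_lo, hden_hi⟩ := exp_neg_mul_sub_exp_neg_mul_bounds a b u
  have hden : 0 < exp (-a * u) - exp (-b * u) :=
    lt_of_lt_of_le (by positivity) hden_lo
  constructor
  · calc (c - b) / (b - a) * exp (-(c - a) * u)
          = exp (-c * u) * ((c - b) * u) / (exp (-a * u) * ((b - a) * u)) := by
            rw [show -(c - a) * u = -c * u - -a * u by ring, exp_sub]
            field_simp
      _ ≤ (exp (-b * u) - exp (-c * u)) / (exp (-a * u) - exp (-b * u)) := by
            gcongr
            exact le_trans (by positivity) hnum_lo
  · calc (exp (-b * u) - exp (-c * u)) / (exp (-a * u) - exp (-b * u))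
          ≤ exp (-b * u) * ((c - b) * u) / (exp (-b * u) * ((b - a) * u)) := by
            gcongr
      _ = (c - b) / (b - a) := by
            field_simp

/-- Two-sided exponential-ratio estimate from the mean value theorem:
for `0 < a < b < c` and `u > 0`,
`((c−b)/(b−a))e^{−(c−a)u} ≤ (e^{−bu} − e^{−cu})/(e^{−au} − e^{−bu}) ≤ (c−b)/(b−a)`. -/
theorem stmt12
    (a b c u : ℝ) (ha : 0 < a) (hab : a < b) (hbc : b < c) (hu : 0 < u) :
    (c - b) / (b - a) * Real.exp (-(c - a) * u)
        ≤ (Real.exp (-b * u) - Real.exp (-c * u)) /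
            (Real.exp (-a * u) - Real.exp (-b * u)) ∧
      (Real.exp (-b * u) - Real.exp (-c * u)) /
          (Real.exp (-a * u) - Real.exp (-b * u))
        ≤ (c - b) / (b - a) :=
  stmt12_general a b c u hab hbc hu
end

section
/- Let α, Γ, σ₁, σ₂ > 0 and let h : ℝ → ℝ be continuously differentiable, bounded, strictly increasing, with bounded derivative. Set A = √(2Γ)/σ₂, B = √(2(α+Γ))/σ₂, and define M¹(x) = (1/α)∫_0^∞ h(x + σ₁ z/√(2α)) e^{−z} dz and M²(x) = ρ₋(x)S₋(x) + ρ₊(x)S₊(x), where ρ₊(x) = 2/(2α + σ₂²(B+A)² e^{2Ax}), ρ₋(x) = 2/(2α + σ₂²(B−A)² e^{−2Ax}), S₊(x) = ∫_0^∞ h(x + s/(B+A)) e^{−s} ds, S₋(x) = ∫_0^∞ h(x + s/(B−A)) e^{−s} ds. Assume that √(1 + Γ/α) − √(Γ/α) < σ₂/σ₁ < √(1 + Γ/α) + √(Γ/α). Then there exist real numbers x₊ and x₋ such that M¹(x) < M²(x) for every x > x₊, and M¹(x) > M²(x) for every x < x₋. -/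
open MeasureTheory Set

namespace Stmt13Helper

open Filter Real Topology

lemma deriv_nonneg_of_monotone {f : ℝ → ℝ} (hf : Differentiable ℝ f) (hm : Monotone f)
    (y : ℝ) : 0 ≤ deriv f y := by
  have h0 : HasDerivWithinAt f (deriv f y) (Ioi y) y := (hf y).hasDerivAt.hasDerivWithinAt
  have h1 : Tendsto (slope f y) (𝓝[>] y) (𝓝 (deriv f y)) := by
    have := hasDerivWithinAt_iff_tendsto_slope.1 h0
    have heq : Ioi y \ {y} = Ioi y := by
      ext z; simp (config := {contextual := true}) [lt_irrefl, ne_of_gt]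
    rwa [heq] at this
  refine ge_of_tendsto h1 ?_
  filter_upwards [self_mem_nhdsWithin] with z hz
  rw [slope_def_field]
  exact div_nonneg (sub_nonneg.2 (hm (le_of_lt hz))) (sub_nonneg.2 (le_of_lt hz))

lemma one_sub_exp_le {a b u : ℝ} (hb : 0 < b) (hu : 0 ≤ u) :
    1 - Real.exp (-(a*u)) ≤ max 1 (a/b) * (1 - Real.exp (-(b*u))) := by
  have hexp : Real.exp (-(b*u)) ≤ 1 := Real.exp_le_one_iff.2 (by nlinarith)
  rcases le_or_gt a b with hab | hab
  · have h1 : 1 - Real.exp (-(a*u)) ≤ 1 - Real.exp (-(b*u)) := by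
      have : Real.exp (-(b*u)) ≤ Real.exp (-(a*u)) := Real.exp_le_exp.2 (by nlinarith)
      linarith
    calc 1 - Real.exp (-(a*u)) ≤ 1 - Real.exp (-(b*u)) := h1
      _ = 1 * (1 - Real.exp (-(b*u))) := by ring
      _ ≤ max 1 (a/b) * (1 - Real.exp (-(b*u))) :=
        mul_le_mul_of_nonneg_right (le_max_left _ _) (by linarith)
  · have hc : 1 ≤ a / b := (one_le_div hb).2 hab.le
    have key : 1 + (a/b) * (Real.exp (-(b*u)) - 1) ≤ (Real.exp (-(b*u))) ^ (a/b) := by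
      have := one_add_mul_self_le_rpow_one_add (s := Real.exp (-(b*u)) - 1)
        (by linarith [Real.exp_pos (-(b*u))]) hc
      simpa using this
    have hpow : (Real.exp (-(b*u))) ^ (a/b) = Real.exp (-(a*u)) := by
      rw [← Real.exp_mul]
      congr 1
      field_simp
    rw [hpow] at key
    have hmax : max 1 (a/b) = a/b := max_eq_right hc
    rw [hmax]
    nlinarith

lemma int_aux {f : ℝ → ℝ} (hf : Continuous f) {D l : ℝ} (hl : 0 < l)
    (hD : ∀ u, 0 ≤ u → |f u| ≤ D) {a : ℝ} (ha : 0 ≤ a) :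
    IntegrableOn (fun u => f u * Real.exp (-(l * u))) (Ioi a) := by
  have h1 : IntegrableOn (fun u : ℝ => D * Real.exp (-l * u)) (Ioi a) :=
    (exp_neg_integrableOn_Ioi a hl).const_mul D
  refine Integrable.mono' h1 ?_ ?_
  · exact ((hf.mul (Real.continuous_exp.comp (by continuity))).aestronglyMeasurable).restrict
  · rw [ae_restrict_iff' measurableSet_Ioi]
    refine ae_of_all _ fun u hu => ?_
    have hu0 : 0 ≤ u := le_of_lt (lt_of_le_of_lt ha hu)
    have habs : |f u * Real.exp (-(l*u))| = |f u| * Real.exp (-(l*u)) := by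
      rw [abs_mul, abs_of_pos (Real.exp_pos _)]
    rw [Real.norm_eq_abs, habs, neg_mul]
    exact mul_le_mul_of_nonneg_right (hD u hu0) (Real.exp_pos _).le

lemma exp_int_Ioi {l : ℝ} (hl : 0 < l) (c : ℝ) :
    ∫ u in Ioi c, Real.exp (-(l * u)) = Real.exp (-(l * c)) / l := by
  have hderiv : ∀ u ∈ Ici c, HasDerivAt (fun u => -Real.exp (-(l*u)) / l)
      (Real.exp (-(l*u))) u := by
    intro u _
    have h1 : HasDerivAt (fun u : ℝ => -(l*u)) (-l) u := by
      simpa using ((hasDerivAt_id u).const_mul (-l))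
    have h2 := (h1.exp.neg.div_const l)
    exact h2.congr_deriv (by field_simp)
  have hint : IntegrableOn (fun u => Real.exp (-(l*u))) (Ioi c) := by
    simpa [neg_mul] using exp_neg_integrableOn_Ioi c hl
  have htend : Tendsto (fun u => -Real.exp (-(l*u)) / l) atTop (𝓝 0) := by
    have h3 : Tendsto (fun u : ℝ => -(l*u)) atTop atBot := by
      have := Tendsto.const_mul_atTop_of_neg (show (-l:ℝ) < 0 by linarith)
        (tendsto_id (α := ℝ) (x := atTop))
      simpa [neg_mul] using this
    have := (Real.tendsto_exp_atBot.comp h3).neg.div_const l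
    simpa using this
  have := integral_Ioi_of_hasDerivAt_of_tendsto' hderiv hint htend
  rw [this]
  field_simp
  ring

lemma ftc_inc {h : ℝ → ℝ} (hh : ContDiff ℝ 1 h) (x a b : ℝ) (hab : a ≤ b) :
    ∫ u in Ioc a b, deriv h (x + u) = h (x + b) - h (x + a) := by
  have h1 : ∫ u in Ioc a b, deriv h (x + u) = ∫ u in a..b, deriv h (x + u) := by
    rw [intervalIntegral.integral_of_le hab]
  rw [h1, intervalIntegral.integral_comp_add_left (fun y => deriv h y) x]
  have hdiff : ∀ y ∈ uIcc (x+a) (x+b), DifferentiableAt ℝ h y := fun y _ =>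
    (hh.differentiable one_ne_zero).differentiableAt
  have hcont : ContinuousOn (deriv h) (uIcc (x+a) (x+b)) :=
    (hh.continuous_deriv le_rfl).continuousOn
  rw [intervalIntegral.integral_deriv_eq_sub hdiff (hcont.intervalIntegrable)]

lemma J_eq {h : ℝ → ℝ} (hh : ContDiff ℝ 1 h) {C C' : ℝ} (hC : ∀ y, |h y| ≤ C)
    (hC' : ∀ y, |deriv h y| ≤ C') {l : ℝ} (hl : 0 < l) (x : ℝ) :
    ∫ s in Ioi (0:ℝ), h (x + s / l) * Real.exp (-s)
      = h x + ∫ u in Ioi (0:ℝ), deriv h (x + u) * Real.exp (-(l * u)) := by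
  have hdiff : Differentiable ℝ h := hh.differentiable one_ne_zero
  have hdc : Continuous (deriv h) := hh.continuous_deriv le_rfl
  have hl' : l ≠ 0 := ne_of_gt hl
  have hint1 : IntegrableOn (fun s => h (x + s / l) * Real.exp (-s)) (Ioi (0:ℝ)) := by
    have := int_aux (f := fun s => h (x + s / l))
      (hh.continuous.comp (by continuity)) (l := 1) one_pos
      (D := C) (fun u _ => hC _) (a := 0) le_rfl
    simpa using this
  have hint2 : IntegrableOn (fun s => deriv h (x + s / l) * Real.exp (-s)) (Ioi (0:ℝ)) := by
    have := int_aux (f := fun s => deriv h (x + s / l))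
      (hdc.comp (by continuity)) (l := 1) one_pos
      (D := C') (fun u _ => hC' _) (a := 0) le_rfl
    simpa using this
  have key : ∫ s in Ioi (0:ℝ),
      (h (x + s / l) * Real.exp (-s) - deriv h (x + s / l) * l⁻¹ * Real.exp (-s))
      = h x := by
    have hderiv : ∀ s ∈ Ici (0:ℝ), HasDerivAt (fun s => -(h (x + s / l) * Real.exp (-s)))
        (h (x + s / l) * Real.exp (-s) - deriv h (x + s / l) * l⁻¹ * Real.exp (-s)) s := by
      intro s _
      have hp : HasDerivAt (fun s : ℝ => x + s / l) (1 / l) s := by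
        simpa using ((hasDerivAt_id s).div_const l).const_add x
      have hq : HasDerivAt (fun s : ℝ => h (x + s / l)) (deriv h (x + s / l) * (1 / l)) s :=
        (hdiff (x + s / l)).hasDerivAt.comp s hp
      have he : HasDerivAt (fun s : ℝ => Real.exp (-s)) (Real.exp (-s) * (-1)) s :=
        (hasDerivAt_neg s).exp
      have := (hq.mul he).neg
      refine this.congr_deriv ?_
      field_simp
      ring
    have f'int : IntegrableOn (fun s =>
        h (x + s / l) * Real.exp (-s) - deriv h (x + s / l) * l⁻¹ * Real.exp (-s))
        (Ioi (0:ℝ)) := by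
      apply hint1.sub
      have heq : (fun s => deriv h (x + s / l) * l⁻¹ * Real.exp (-s))
          = fun s => l⁻¹ * (deriv h (x + s / l) * Real.exp (-s)) := by
        funext s; ring
      rw [heq]
      exact hint2.const_mul _
    have htend : Tendsto (fun s => -(h (x + s / l) * Real.exp (-s))) atTop (𝓝 0) := by
      apply squeeze_zero_norm (a := fun s => C * Real.exp (-s))
      · intro s
        rw [norm_neg, norm_mul, Real.norm_eq_abs, Real.norm_eq_abs,
          abs_of_pos (Real.exp_pos _)]
        exact mul_le_mul_of_nonneg_right (hC _) (Real.exp_pos _).le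
      · have : Tendsto (fun s : ℝ => Real.exp (-s)) atTop (𝓝 0) :=
          Real.tendsto_exp_atBot.comp tendsto_neg_atTop_atBot
        simpa using this.const_mul C
    have := integral_Ioi_of_hasDerivAt_of_tendsto' hderiv f'int htend
    rw [this]
    simp
  have hsplit : ∫ s in Ioi (0:ℝ),
      (h (x + s / l) * Real.exp (-s) - deriv h (x + s / l) * l⁻¹ * Real.exp (-s))
      = (∫ s in Ioi (0:ℝ), h (x + s / l) * Real.exp (-s))
        - l⁻¹ * ∫ s in Ioi (0:ℝ), deriv h (x + s / l) * Real.exp (-s) := by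
    rw [integral_sub hint1]
    · congr 1
      rw [← MeasureTheory.integral_const_mul]
      congr 1; funext s; ring
    · have heq : (fun s => deriv h (x + s / l) * l⁻¹ * Real.exp (-s))
          = fun s => l⁻¹ * (deriv h (x + s / l) * Real.exp (-s)) := by
        funext s; ring
      rw [heq]
      exact hint2.const_mul _
  have hsub : ∫ s in Ioi (0:ℝ), deriv h (x + s / l) * Real.exp (-s)
      = l * ∫ u in Ioi (0:ℝ), deriv h (x + u) * Real.exp (-(l * u)) := by
    have h0 := integral_comp_mul_left_Ioi
      (fun u => deriv h (x + u) * Real.exp (-(l * u))) 0 (inv_pos.2 hl)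
    have heq : (fun s => deriv h (x + l⁻¹ * s) * Real.exp (-(l * (l⁻¹ * s))))
        = fun s => deriv h (x + s / l) * Real.exp (-s) := by
      funext s
      rw [mul_inv_cancel_left₀ hl']
      congr 2
      · field_simp
    rw [heq] at h0
    rw [h0]
    simp [smul_eq_mul, hl']
  rw [hsplit, hsub] at key
  have hfin : l⁻¹ * (l * ∫ u in Ioi (0:ℝ), deriv h (x + u) * Real.exp (-(l * u)))
      = ∫ u in Ioi (0:ℝ), deriv h (x + u) * Real.exp (-(l * u)) := by
    field_simp
  rw [hfin] at key
  linarith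

lemma ev_exp_le (c d r s : ℝ) (hc : 0 < c) (hrs : s < r) :
    ∀ᶠ T in atTop, d * Real.exp (s*T) ≤ c * Real.exp (r*T) := by
  have htend : Tendsto (fun T => c * Real.exp ((r-s)*T)) atTop atTop := by
    apply Tendsto.const_mul_atTop hc
    exact Real.tendsto_exp_atTop.comp (Tendsto.const_mul_atTop (by linarith) tendsto_id)
  filter_upwards [htend.eventually_ge_atTop d] with T hT
  have hexp : Real.exp (r*T) = Real.exp ((r-s)*T) * Real.exp (s*T) := by
    rw [← Real.exp_add]; congr 1; ring
  calc d * Real.exp (s*T) ≤ (c * Real.exp ((r-s)*T)) * Real.exp (s*T) :=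
        mul_le_mul_of_nonneg_right hT (Real.exp_pos _).le
    _ = c * Real.exp (r*T) := by rw [hexp]; ring

lemma ev_exp_lt (c d r s : ℝ) (hc : 0 < c) (hrs : s < r) :
    ∀ᶠ T in atTop, d * Real.exp (s*T) < c * Real.exp (r*T) := by
  have htend : Tendsto (fun T => c * Real.exp ((r-s)*T)) atTop atTop := by
    apply Tendsto.const_mul_atTop hc
    exact Real.tendsto_exp_atTop.comp (Tendsto.const_mul_atTop (by linarith) tendsto_id)
  filter_upwards [htend.eventually_gt_atTop d] with T hT
  have hexp : Real.exp (r*T) = Real.exp ((r-s)*T) * Real.exp (s*T) := by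
    rw [← Real.exp_add]; congr 1; ring
  calc d * Real.exp (s*T) < (c * Real.exp ((r-s)*T)) * Real.exp (s*T) :=
        mul_lt_mul_of_pos_right hT (Real.exp_pos _)
    _ = c * Real.exp (r*T) := by rw [hexp]; ring

noncomputable def II (h : ℝ → ℝ) (l x : ℝ) : ℝ :=
  ∫ u in Ioi (0:ℝ), deriv h (x + u) * Real.exp (-(l * u))

lemma II_int {h : ℝ → ℝ} (hh : ContDiff ℝ 1 h) {C' l : ℝ} (hC' : ∀ y, |deriv h y| ≤ C')
    (hl : 0 < l) (x : ℝ) {a : ℝ} (ha : 0 ≤ a) :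
    IntegrableOn (fun u => deriv h (x + u) * Real.exp (-(l * u))) (Ioi a) :=
  int_aux ((hh.continuous_deriv le_rfl).comp (by continuity)) hl (fun u _ => hC' _) ha

lemma II_sub_int {h : ℝ → ℝ} (hh : ContDiff ℝ 1 h) {C' l l' : ℝ}
    (hC' : ∀ y, |deriv h y| ≤ C') (hl : 0 < l) (hl' : 0 < l') (x : ℝ) {a : ℝ} (ha : 0 ≤ a) :
    IntegrableOn (fun u => deriv h (x + u) * (Real.exp (-(l * u)) - Real.exp (-(l' * u))))
      (Ioi a) := by
  have := (II_int hh hC' hl x ha).sub (II_int hh hC' hl' x ha)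
  simpa [mul_sub, Pi.sub_def] using this

lemma II_sub {h : ℝ → ℝ} (hh : ContDiff ℝ 1 h) {C' l l' : ℝ}
    (hC' : ∀ y, |deriv h y| ≤ C') (hl : 0 < l) (hl' : 0 < l') (x : ℝ) :
    II h l x - II h l' x
      = ∫ u in Ioi (0:ℝ), deriv h (x + u) * (Real.exp (-(l * u)) - Real.exp (-(l' * u))) := by
  rw [II, II, ← integral_sub (II_int hh hC' hl x le_rfl) (II_int hh hC' hl' x le_rfl)]
  congr 1; funext u; ring

lemma II_sub_nonneg {h : ℝ → ℝ} (hh : ContDiff ℝ 1 h) {C' l l' : ℝ}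
    (hC' : ∀ y, |deriv h y| ≤ C') (hd0 : ∀ y, 0 ≤ deriv h y)
    (hl : 0 < l) (hll' : l ≤ l') (x : ℝ) :
    0 ≤ II h l x - II h l' x := by
  rw [II_sub hh hC' hl (lt_of_lt_of_le hl hll') x]
  apply setIntegral_nonneg measurableSet_Ioi
  intro u hu
  have hu0 : 0 ≤ u := le_of_lt hu
  have : Real.exp (-(l' * u)) ≤ Real.exp (-(l * u)) :=
    Real.exp_le_exp.2 (by nlinarith)
  exact mul_nonneg (hd0 _) (by linarith)

lemma II_sub_lower {h : ℝ → ℝ} (hh : ContDiff ℝ 1 h) {C' l l' a b : ℝ}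
    (hC' : ∀ y, |deriv h y| ≤ C') (hd0 : ∀ y, 0 ≤ deriv h y)
    (hl : 0 < l) (hll' : l < l') (ha : 0 ≤ a) (hab : a < b) (x : ℝ) :
    (Real.exp (-(l*b)) * (1 - Real.exp (-((l'-l)*a)))) * (h (x+b) - h (x+a))
      ≤ II h l x - II h l' x := by
  have hl'0 : 0 < l' := lt_trans hl hll'
  rw [II_sub hh hC' hl hl'0 x]
  have hsub : Ioc a b ⊆ Ioi (0:ℝ) := fun u hu => lt_of_le_of_lt ha hu.1
  have hnn : 0 ≤ᵐ[volume.restrict (Ioi (0:ℝ))]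
      fun u => deriv h (x + u) * (Real.exp (-(l * u)) - Real.exp (-(l' * u))) := by
    filter_upwards [ae_restrict_mem measurableSet_Ioi] with u hu
    simp only [Pi.zero_apply]
    have hu0 : 0 ≤ u := le_of_lt hu
    have : Real.exp (-(l' * u)) ≤ Real.exp (-(l * u)) :=
      Real.exp_le_exp.2 (by nlinarith)
    exact mul_nonneg (hd0 _) (by linarith)
  have step1 : ∫ u in Ioc a b, deriv h (x + u) * (Real.exp (-(l * u)) - Real.exp (-(l' * u)))
      ≤ ∫ u in Ioi (0:ℝ), deriv h (x + u) * (Real.exp (-(l * u)) - Real.exp (-(l' * u))) :=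
    setIntegral_mono_set (II_sub_int hh hC' hl hl'0 x le_rfl) hnn
      (HasSubset.Subset.eventuallyLE hsub)
  have step2 : ∫ u in Ioc a b,
        deriv h (x + u) * (Real.exp (-(l*b)) * (1 - Real.exp (-((l'-l)*a))))
      ≤ ∫ u in Ioc a b, deriv h (x + u) * (Real.exp (-(l * u)) - Real.exp (-(l' * u))) := by
    apply setIntegral_mono_on
    · apply Continuous.integrableOn_Ioc
      exact (((hh.continuous_deriv le_rfl).comp (by continuity)).mul continuous_const)
    · exact (II_sub_int hh hC' hl hl'0 x le_rfl).mono_set hsub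
    · exact measurableSet_Ioc
    · intro u hu
      have hu1 : a ≤ u := le_of_lt hu.1
      have hu2 : u ≤ b := hu.2
      have hu0 : 0 ≤ u := le_trans ha hu1
      apply mul_le_mul_of_nonneg_left _ (hd0 _)
      have e1 : Real.exp (-(l * u)) - Real.exp (-(l' * u))
          = Real.exp (-(l*u)) * (1 - Real.exp (-((l'-l)*u))) := by
        rw [mul_sub, mul_one, ← Real.exp_add]
        congr 2; ring
      rw [e1]
      have f1 : Real.exp (-(l*b)) ≤ Real.exp (-(l*u)) := Real.exp_le_exp.2 (by nlinarith)
      have f2 : 1 - Real.exp (-((l'-l)*a)) ≤ 1 - Real.exp (-((l'-l)*u)) := by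
        have : Real.exp (-((l'-l)*u)) ≤ Real.exp (-((l'-l)*a)) :=
          Real.exp_le_exp.2 (by nlinarith)
        linarith
      have f3 : 0 ≤ 1 - Real.exp (-((l'-l)*a)) := by
        have : Real.exp (-((l'-l)*a)) ≤ 1 := Real.exp_le_one_iff.2 (by nlinarith)
        linarith
      exact mul_le_mul f1 f2 f3 (Real.exp_pos _).le
  have step3 : ∫ u in Ioc a b,
        deriv h (x + u) * (Real.exp (-(l*b)) * (1 - Real.exp (-((l'-l)*a))))
      = (Real.exp (-(l*b)) * (1 - Real.exp (-((l'-l)*a)))) * (h (x+b) - h (x+a)) := by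
    rw [MeasureTheory.integral_mul_const, ftc_inc hh x a b hab.le]
    ring
  linarith

/-- Kernel comparison for the high-state side. -/
lemma kernel_plus {p l1 q u : ℝ} (hp : 0 < p) (hpl : p < l1) (hlq : l1 < q) (hu : 0 ≤ u) :
    Real.exp (-(l1*u)) - Real.exp (-(q*u))
      ≤ ((q - l1)/(l1 - p)) * (Real.exp (-(p*u)) - Real.exp (-(l1*u))) := by
  have hA1 : Real.exp (-(q*u)) = Real.exp (-(l1*u)) * Real.exp (-((q-l1)*u)) := by
    rw [← Real.exp_add]; congr 1; ring
  have hB1 : (-((q-l1)*u)) + 1 ≤ Real.exp (-((q-l1)*u)) := Real.add_one_le_exp _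
  have h1 : Real.exp (-(l1*u)) - Real.exp (-(q*u)) ≤ (q-l1)*u*Real.exp (-(l1*u)) := by
    rw [hA1]
    nlinarith [Real.exp_pos (-(l1*u))]
  have hA2 : Real.exp (-(p*u)) = Real.exp (-(l1*u)) * Real.exp ((l1-p)*u) := by
    rw [← Real.exp_add]; congr 1; ring
  have hB2 : ((l1-p)*u) + 1 ≤ Real.exp ((l1-p)*u) := Real.add_one_le_exp _
  have h2 : (l1-p)*u*Real.exp (-(l1*u)) ≤ Real.exp (-(p*u)) - Real.exp (-(l1*u)) := by
    rw [hA2]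
    nlinarith [Real.exp_pos (-(l1*u))]
  have hlp : l1 - p ≠ 0 := ne_of_gt (by linarith)
  have hcp : ((q - l1)/(l1 - p)) * ((l1-p)*u*Real.exp (-(l1*u)))
      = (q-l1)*u*Real.exp (-(l1*u)) := by
    field_simp
  have hcp0 : 0 ≤ (q - l1)/(l1 - p) := div_nonneg (by linarith) (by linarith)
  calc Real.exp (-(l1*u)) - Real.exp (-(q*u)) ≤ (q-l1)*u*Real.exp (-(l1*u)) := h1
    _ = ((q - l1)/(l1 - p)) * ((l1-p)*u*Real.exp (-(l1*u))) := hcp.symm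
    _ ≤ ((q - l1)/(l1 - p)) * (Real.exp (-(p*u)) - Real.exp (-(l1*u))) :=
        mul_le_mul_of_nonneg_left h2 hcp0

/-- Kernel comparison for the low-state side. -/
lemma kernel_minus {p l1 q u a : ℝ} (hp : 0 < p) (hpl : p < l1) (hlq : l1 < q)
    (hu : 0 ≤ u) (hua : u ≤ a) :
    Real.exp (-(p*u)) - Real.exp (-(l1*u))
      ≤ (max 1 ((l1-p)/(q-l1)) * Real.exp ((l1-p)*a))
        * (Real.exp (-(l1*u)) - Real.exp (-(q*u))) := by
  have hC2 : (1:ℝ) ≤ max 1 ((l1-p)/(q-l1)) := le_max_left _ _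
  have e1 : Real.exp (-(p*u)) - Real.exp (-(l1*u))
      = Real.exp (-(p*u)) * (1 - Real.exp (-((l1-p)*u))) := by
    rw [mul_sub, mul_one, ← Real.exp_add]; congr 2; ring
  have e2a : Real.exp (-(p*u)) = Real.exp ((l1-p)*u) * Real.exp (-(l1*u)) := by
    rw [← Real.exp_add]; congr 1; ring
  have e2b : Real.exp (-(p*u)) * Real.exp (-((q-l1)*u))
      = Real.exp ((l1-p)*u) * Real.exp (-(q*u)) := by
    rw [← Real.exp_add, ← Real.exp_add]; congr 1; ring
  have e2 : Real.exp (-(p*u)) * (1 - Real.exp (-((q-l1)*u)))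
      = Real.exp ((l1-p)*u) * (Real.exp (-(l1*u)) - Real.exp (-(q*u))) := by
    linear_combination e2a - e2b
  have hone := one_sub_exp_le (a := l1 - p) (b := q - l1) (by linarith) hu
  have hk2 : 0 ≤ Real.exp (-(l1*u)) - Real.exp (-(q*u)) := by
    have : Real.exp (-(q*u)) ≤ Real.exp (-(l1*u)) := Real.exp_le_exp.2 (by nlinarith)
    linarith
  calc Real.exp (-(p*u)) - Real.exp (-(l1*u))
      = Real.exp (-(p*u)) * (1 - Real.exp (-((l1-p)*u))) := e1
    _ ≤ Real.exp (-(p*u)) * (max 1 ((l1-p)/(q-l1)) * (1 - Real.exp (-((q-l1)*u)))) :=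
        mul_le_mul_of_nonneg_left hone (Real.exp_pos _).le
    _ = max 1 ((l1-p)/(q-l1)) * (Real.exp (-(p*u)) * (1 - Real.exp (-((q-l1)*u)))) := by ring
    _ = max 1 ((l1-p)/(q-l1)) * (Real.exp ((l1-p)*u)
          * (Real.exp (-(l1*u)) - Real.exp (-(q*u)))) := by rw [e2]
    _ ≤ max 1 ((l1-p)/(q-l1)) * (Real.exp ((l1-p)*a)
          * (Real.exp (-(l1*u)) - Real.exp (-(q*u)))) := by
        apply mul_le_mul_of_nonneg_left _ (by linarith)
        apply mul_le_mul_of_nonneg_right _ hk2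
        exact Real.exp_le_exp.2 (by nlinarith)
    _ = (max 1 ((l1-p)/(q-l1)) * Real.exp ((l1-p)*a))
          * (Real.exp (-(l1*u)) - Real.exp (-(q*u))) := by ring

lemma plus_key {h : ℝ → ℝ} (hh : ContDiff ℝ 1 h) {C' : ℝ} (hC' : ∀ y, |deriv h y| ≤ C')
    (hd0 : ∀ y, 0 ≤ deriv h y) (hmono : StrictMono h) {p l1 q tv : ℝ}
    (hp : 0 < p) (hpl : p < l1) (hlq : l1 < q) (htv : 0 ≤ tv)
    (hcond : tv * ((q - l1)/(l1 - p)) < 1) (x : ℝ) :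
    tv * (II h l1 x - II h q x) < II h p x - II h l1 x := by
  have hl1 : 0 < l1 := lt_trans hp hpl
  have hq : 0 < q := lt_trans hl1 hlq
  have hQle : II h l1 x - II h q x ≤ ((q-l1)/(l1-p)) * (II h p x - II h l1 x) := by
    rw [II_sub hh hC' hl1 hq x, II_sub hh hC' hp hl1 x, ← MeasureTheory.integral_const_mul]
    apply setIntegral_mono_on
    · exact II_sub_int hh hC' hl1 hq x le_rfl
    · exact (II_sub_int hh hC' hp hl1 x le_rfl).const_mul _
    · exact measurableSet_Ioi
    · intro u hu
      have hker := kernel_plus hp hpl hlq (le_of_lt hu)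
      calc deriv h (x+u) * (Real.exp (-(l1*u)) - Real.exp (-(q*u)))
          ≤ deriv h (x+u) * (((q - l1)/(l1 - p)) * (Real.exp (-(p*u)) - Real.exp (-(l1*u))))
            := mul_le_mul_of_nonneg_left hker (hd0 _)
        _ = ((q - l1)/(l1 - p)) * (deriv h (x+u) * (Real.exp (-(p*u)) - Real.exp (-(l1*u))))
            := by ring
  have hP : 0 < II h p x - II h l1 x := by
    have hlow := II_sub_lower hh (l := p) (l' := l1) (a := 1) (b := 2) hC' hd0 hp hpl
      zero_le_one one_lt_two x
    have hc0 : 0 < Real.exp (-(p*2)) * (1 - Real.exp (-((l1-p)*1))) := by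
      apply mul_pos (Real.exp_pos _)
      have : Real.exp (-((l1-p)*1)) < 1 := Real.exp_lt_one_iff.2 (by nlinarith)
      linarith
    have hmono2 : h (x+1) < h (x+2) := hmono (by linarith)
    nlinarith
  calc tv * (II h l1 x - II h q x) ≤ tv * (((q-l1)/(l1-p)) * (II h p x - II h l1 x)) :=
        mul_le_mul_of_nonneg_left hQle htv
    _ = (tv * ((q-l1)/(l1-p))) * (II h p x - II h l1 x) := by ring
    _ < 1 * (II h p x - II h l1 x) := mul_lt_mul_of_pos_right hcond hP
    _ = II h p x - II h l1 x := one_mul _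

lemma minus_key {h : ℝ → ℝ} (hh : ContDiff ℝ 1 h) {C' : ℝ} (hC' : ∀ y, |deriv h y| ≤ C')
    (hd0 : ∀ y, 0 ≤ deriv h y) (hmono : StrictMono h) {p l1 q tv θ T : ℝ}
    (hp : 0 < p) (hpl : p < l1) (hlq : l1 < q) (htv : 0 ≤ tv) (hθ0 : 0 < θ) (hT : 1 ≤ T)
    (hc1 : max 1 ((l1-p)/(q-l1)) * Real.exp ((l1-p)*(θ*T)) ≤ tv/2)
    (hc2 : (C'/p) * Real.exp (-(p*(θ*T)))
      < tv/2 * (Real.exp (-(l1*(T+1))) * (1 - Real.exp (-(q-l1))) * (h 1 - h 0))) :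
    II h p (-T) - II h l1 (-T) < tv * (II h l1 (-T) - II h q (-T)) := by
  have hl1 : 0 < l1 := lt_trans hp hpl
  have hq : 0 < q := lt_trans hl1 hlq
  set x := -T with hxdef
  set a := θ*T with hadef
  have ha0 : 0 < a := mul_pos hθ0 (by linarith)
  have hfac : 0 ≤ h 1 - h 0 := sub_nonneg.2 (hmono.monotone (by norm_num))
  -- lower bound for Q2 := II h l1 x - II h q x
  have hQ2K : Real.exp (-(l1*(T+1))) * (1 - Real.exp (-(q-l1))) * (h 1 - h 0)
      ≤ II h l1 x - II h q x := by
    have hlow := II_sub_lower hh (l := l1) (l' := q) (a := T) (b := T+1) hC' hd0 hl1 hlq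
      (by linarith) (by linarith) x
    rw [show x + (T+1) = 1 by rw [hxdef]; ring, show x + T = 0 by rw [hxdef]; ring] at hlow
    have hmonoexp : 1 - Real.exp (-(q-l1)) ≤ 1 - Real.exp (-((q-l1)*T)) := by
      have : Real.exp (-((q-l1)*T)) ≤ Real.exp (-(q-l1)) := Real.exp_le_exp.2 (by nlinarith)
      linarith
    have := mul_le_mul_of_nonneg_right
      (mul_le_mul_of_nonneg_left hmonoexp (Real.exp_pos (-(l1*(T+1)))).le) hfac
    linarith
  have hQ2nn : 0 ≤ II h l1 x - II h q x := II_sub_nonneg hh hC' hd0 hl1 hlq.le x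
  -- integrability of the pieces
  have int1 : IntegrableOn
      (fun u => deriv h (x+u) * (Real.exp (-(p*u)) - Real.exp (-(l1*u)))) (Ioc 0 a) :=
    (II_sub_int hh hC' hp hl1 x le_rfl).mono_set Ioc_subset_Ioi_self
  have int2 : IntegrableOn
      (fun u => deriv h (x+u) * (Real.exp (-(p*u)) - Real.exp (-(l1*u)))) (Ioi a) :=
    II_sub_int hh hC' hp hl1 x ha0.le
  -- decomposition of II p - II l1
  have hsplit : II h p x - II h l1 x
      = (∫ u in Ioc 0 a, deriv h (x+u) * (Real.exp (-(p*u)) - Real.exp (-(l1*u))))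
        + ∫ u in Ioi a, deriv h (x+u) * (Real.exp (-(p*u)) - Real.exp (-(l1*u))) := by
    rw [II_sub hh hC' hp hl1 x, ← Ioc_union_Ioi_eq_Ioi ha0.le,
      setIntegral_union (Ioc_disjoint_Ioi le_rfl) measurableSet_Ioi int1 int2]
  -- bound on the first piece
  have hb1 : (∫ u in Ioc 0 a, deriv h (x+u) * (Real.exp (-(p*u)) - Real.exp (-(l1*u))))
      ≤ (max 1 ((l1-p)/(q-l1)) * Real.exp ((l1-p)*a)) * (II h l1 x - II h q x) := by
    have hD2 : (0:ℝ) ≤ max 1 ((l1-p)/(q-l1)) * Real.exp ((l1-p)*a) := by positivity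
    have s1 : (∫ u in Ioc 0 a, deriv h (x+u) * (Real.exp (-(p*u)) - Real.exp (-(l1*u))))
        ≤ ∫ u in Ioc 0 a, (max 1 ((l1-p)/(q-l1)) * Real.exp ((l1-p)*a))
            * (deriv h (x+u) * (Real.exp (-(l1*u)) - Real.exp (-(q*u)))) := by
      apply setIntegral_mono_on int1
        (((II_sub_int hh hC' hl1 hq x le_rfl).mono_set Ioc_subset_Ioi_self).const_mul _)
        measurableSet_Ioc
      intro u hu
      have hker := kernel_minus hp hpl hlq hu.1.le hu.2
      calc deriv h (x+u) * (Real.exp (-(p*u)) - Real.exp (-(l1*u)))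
          ≤ deriv h (x+u) * ((max 1 ((l1-p)/(q-l1)) * Real.exp ((l1-p)*a))
              * (Real.exp (-(l1*u)) - Real.exp (-(q*u)))) :=
            mul_le_mul_of_nonneg_left hker (hd0 _)
        _ = (max 1 ((l1-p)/(q-l1)) * Real.exp ((l1-p)*a))
              * (deriv h (x+u) * (Real.exp (-(l1*u)) - Real.exp (-(q*u)))) := by ring
    have s2 : ∫ u in Ioc 0 a, (max 1 ((l1-p)/(q-l1)) * Real.exp ((l1-p)*a))
            * (deriv h (x+u) * (Real.exp (-(l1*u)) - Real.exp (-(q*u))))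
        = (max 1 ((l1-p)/(q-l1)) * Real.exp ((l1-p)*a))
            * ∫ u in Ioc 0 a, deriv h (x+u) * (Real.exp (-(l1*u)) - Real.exp (-(q*u))) :=
      MeasureTheory.integral_const_mul _ _
    have s3 : (∫ u in Ioc 0 a, deriv h (x+u) * (Real.exp (-(l1*u)) - Real.exp (-(q*u))))
        ≤ II h l1 x - II h q x := by
      rw [II_sub hh hC' hl1 hq x]
      apply setIntegral_mono_set (II_sub_int hh hC' hl1 hq x le_rfl)
      · filter_upwards [ae_restrict_mem measurableSet_Ioi] with u hu
        simp only [Pi.zero_apply]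
        have hu0 : 0 ≤ u := le_of_lt hu
        have : Real.exp (-(q * u)) ≤ Real.exp (-(l1 * u)) :=
          Real.exp_le_exp.2 (by nlinarith)
        exact mul_nonneg (hd0 _) (by linarith)
      · exact HasSubset.Subset.eventuallyLE Ioc_subset_Ioi_self
    calc (∫ u in Ioc 0 a, deriv h (x+u) * (Real.exp (-(p*u)) - Real.exp (-(l1*u))))
        ≤ _ := s1
      _ = _ := s2
      _ ≤ (max 1 ((l1-p)/(q-l1)) * Real.exp ((l1-p)*a)) * (II h l1 x - II h q x) :=
          mul_le_mul_of_nonneg_left s3 hD2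
  -- bound on the second piece
  have hb2 : (∫ u in Ioi a, deriv h (x+u) * (Real.exp (-(p*u)) - Real.exp (-(l1*u))))
      ≤ (C'/p) * Real.exp (-(p*a)) := by
    have hC'0 : 0 ≤ C' := le_trans (abs_nonneg _) (hC' 0)
    have intRHS : IntegrableOn (fun u : ℝ => C' * Real.exp (-(p*u))) (Ioi a) := by
      simpa [neg_mul, IntegrableOn] using (exp_neg_integrableOn_Ioi a hp).const_mul C'
    have s1 : (∫ u in Ioi a, deriv h (x+u) * (Real.exp (-(p*u)) - Real.exp (-(l1*u))))
        ≤ ∫ u in Ioi a, C' * Real.exp (-(p*u)) := by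
      apply setIntegral_mono_on int2 intRHS measurableSet_Ioi
      intro u hu
      have hu0 : 0 ≤ u := le_of_lt (lt_of_le_of_lt ha0.le hu)
      have hd1 : deriv h (x+u) ≤ C' := (le_abs_self _).trans (hC' _)
      have hknn : 0 ≤ Real.exp (-(p*u)) - Real.exp (-(l1*u)) := by
        have : Real.exp (-(l1*u)) ≤ Real.exp (-(p*u)) := Real.exp_le_exp.2 (by nlinarith)
        linarith
      have hk : Real.exp (-(p*u)) - Real.exp (-(l1*u)) ≤ Real.exp (-(p*u)) := by
        have := (Real.exp_pos (-(l1*u))).le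
        linarith
      calc deriv h (x+u) * (Real.exp (-(p*u)) - Real.exp (-(l1*u)))
          ≤ C' * (Real.exp (-(p*u)) - Real.exp (-(l1*u))) :=
            mul_le_mul_of_nonneg_right hd1 hknn
        _ ≤ C' * Real.exp (-(p*u)) := mul_le_mul_of_nonneg_left hk hC'0
    have s2 : ∫ u in Ioi a, C' * Real.exp (-(p*u))
        = C' * (Real.exp (-(p*a)) / p) := by
      rw [MeasureTheory.integral_const_mul, exp_int_Ioi hp a]
    rw [s2] at s1
    calc (∫ u in Ioi a, deriv h (x+u) * (Real.exp (-(p*u)) - Real.exp (-(l1*u))))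
        ≤ C' * (Real.exp (-(p*a)) / p) := s1
      _ = (C'/p) * Real.exp (-(p*a)) := by ring
  -- final chaining
  have hc1' : (max 1 ((l1-p)/(q-l1)) * Real.exp ((l1-p)*a)) * (II h l1 x - II h q x)
      ≤ tv/2 * (II h l1 x - II h q x) := mul_le_mul_of_nonneg_right hc1 hQ2nn
  have hc2' : (C'/p) * Real.exp (-(p*a)) < tv/2 * (II h l1 x - II h q x) :=
    lt_of_lt_of_le hc2 (mul_le_mul_of_nonneg_left hQ2K (by linarith))
  linarith

end Stmt13Helper

open MeasureTheory Set Stmt13Helper Filter Real Topology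

set_option maxHeartbeats 2000000 in
/-- Optimal allocation for the two-armed bandit: in the intermediate parameter
regime the Gittins index of the risky (DMPS) arm dominates at high states, and
the Brownian arm dominates at low states. -/
theorem stmt13
    (α Γ σ₁ σ₂ : ℝ) (hα : 0 < α) (hΓ : 0 < Γ) (hσ₁ : 0 < σ₁) (hσ₂ : 0 < σ₂)
    (h : ℝ → ℝ) (hh : ContDiff ℝ 1 h) (hhb : ∃ C, ∀ x, |h x| ≤ C)
    (hmono : StrictMono h) (hhb' : ∃ C, ∀ x, |deriv h x| ≤ C)
    (A B : ℝ)
    (hA : A = Real.sqrt (2 * Γ) / σ₂)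
    (hB : B = Real.sqrt (2 * (α + Γ)) / σ₂)
    (M₁ M₂ : ℝ → ℝ)
    (hM₁ : ∀ x, M₁ x =
      (1 / α) * ∫ z in Ioi (0 : ℝ), h (x + σ₁ * z / Real.sqrt (2 * α)) * Real.exp (-z))
    (hM₂ : ∀ x, M₂ x =
      (2 / (2 * α + σ₂ ^ 2 * (B - A) ^ 2 * Real.exp (-2 * A * x))) *
          (∫ s in Ioi (0 : ℝ), h (x + s / (B - A)) * Real.exp (-s))
        + (2 / (2 * α + σ₂ ^ 2 * (B + A) ^ 2 * Real.exp (2 * A * x))) *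
          (∫ s in Ioi (0 : ℝ), h (x + s / (B + A)) * Real.exp (-s)))
    (hlow : Real.sqrt (1 + Γ / α) - Real.sqrt (Γ / α) < σ₂ / σ₁)
    (hhigh : σ₂ / σ₁ < Real.sqrt (1 + Γ / α) + Real.sqrt (Γ / α)) :
    ∃ xp xm : ℝ,
      (∀ x, xp < x → M₁ x < M₂ x) ∧ (∀ x, x < xm → M₂ x < M₁ x) := by
  obtain ⟨C, hC⟩ := hhb
  obtain ⟨C', hC'⟩ := hhb'
  have hdiff : Differentiable ℝ h := hh.differentiable one_ne_zero
  have hd0 : ∀ y, 0 ≤ deriv h y := deriv_nonneg_of_monotone hdiff hmono.monotone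
  have hC'0 : 0 ≤ C' := le_trans (abs_nonneg _) (hC' 0)
  have hdl : 0 < h 1 - h 0 := sub_pos.2 (hmono (show (0:ℝ) < 1 by norm_num))
  set p := B - A with hpdef
  set q := B + A with hqdef
  set l1 := Real.sqrt (2*α) / σ₁ with hl1def
  clear_value p q l1
  have hs2a : 0 < Real.sqrt (2*α) := Real.sqrt_pos.2 (by linarith)
  have hl10 : 0 < l1 := by rw [hl1def]; exact div_pos hs2a hσ₁
  have hA0 : 0 < A := by rw [hA]; exact div_pos (Real.sqrt_pos.2 (by linarith)) hσ₂
  have hB0 : 0 < B := by rw [hB]; exact div_pos (Real.sqrt_pos.2 (by linarith)) hσ₂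
  have hq0 : 0 < q := by rw [hqdef]; linarith
  have hpq2a : σ₂^2 * (p*q) = 2*α := by
    have hB2 : B^2 = 2*(α+Γ)/σ₂^2 := by
      rw [hB, div_pow, Real.sq_sqrt (by linarith : (0:ℝ) ≤ 2*(α+Γ))]
    have hA2 : A^2 = 2*Γ/σ₂^2 := by
      rw [hA, div_pow, Real.sq_sqrt (by linarith : (0:ℝ) ≤ 2*Γ)]
    have hpq : p*q = B^2 - A^2 := by rw [hpdef, hqdef]; ring
    rw [hpq, hB2, hA2]
    field_simp
    ring
  have hp0 : 0 < p := by
    nlinarith [mul_pos (pow_pos hσ₂ 2) hq0]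
  have hqp2A : q - p = 2*A := by rw [hpdef, hqdef]; ring
  -- ordering of the rates
  have hkey1 : Real.sqrt (2*(α+Γ)) = Real.sqrt (1+Γ/α) * Real.sqrt (2*α) := by
    rw [← Real.sqrt_mul (by positivity)]
    congr 1
    field_simp
  have hkey2 : Real.sqrt (2*Γ) = Real.sqrt (Γ/α) * Real.sqrt (2*α) := by
    rw [← Real.sqrt_mul (by positivity)]
    congr 1
    field_simp
  have hl1q : l1 < q := by
    have e1 : σ₂/σ₁ * (Real.sqrt (2*α)/σ₂) = l1 := by
      rw [hl1def]; field_simp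
    have e2 : (Real.sqrt (1+Γ/α) + Real.sqrt (Γ/α)) * (Real.sqrt (2*α)/σ₂) = q := by
      rw [hqdef, hA, hB, hkey1, hkey2]
      field_simp
    calc l1 = σ₂/σ₁ * (Real.sqrt (2*α)/σ₂) := e1.symm
      _ < (Real.sqrt (1+Γ/α) + Real.sqrt (Γ/α)) * (Real.sqrt (2*α)/σ₂) :=
          mul_lt_mul_of_pos_right hhigh (div_pos hs2a hσ₂)
      _ = q := e2
  have hpl1 : p < l1 := by
    have e1 : σ₂/σ₁ * (Real.sqrt (2*α)/σ₂) = l1 := by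
      rw [hl1def]; field_simp
    have e2 : (Real.sqrt (1+Γ/α) - Real.sqrt (Γ/α)) * (Real.sqrt (2*α)/σ₂) = p := by
      rw [hpdef, hA, hB, hkey1, hkey2]
      field_simp
    calc p = (Real.sqrt (1+Γ/α) - Real.sqrt (Γ/α)) * (Real.sqrt (2*α)/σ₂) := e2.symm
      _ < σ₂/σ₁ * (Real.sqrt (2*α)/σ₂) :=
          mul_lt_mul_of_pos_right hlow (div_pos hs2a hσ₂)
      _ = l1 := e1
  -- index formulas
  have hM1' : ∀ x, M₁ x = (1/α) * (h x + II h l1 x) := by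
    intro x
    have harg : ∀ z : ℝ, x + σ₁ * z / Real.sqrt (2*α) = x + z / l1 := by
      intro z; rw [hl1def]; field_simp
    rw [hM₁ x]
    congr 1
    simp only [II]
    rw [← J_eq hh hC hC' hl10 x]
    apply setIntegral_congr_fun measurableSet_Ioi
    intro z _
    dsimp only
    rw [harg z]
  have hM2' : ∀ x, M₂ x
      = (1/(α*(1 + (p/q) * Real.exp (-(2*A*x))))) * (h x + II h p x)
        + (((p/q) * Real.exp (-(2*A*x)))/(α*(1 + (p/q) * Real.exp (-(2*A*x)))))
          * (h x + II h q x) := by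
    intro x
    have hcoef1 : 2 / (2*α + σ₂^2 * p^2 * Real.exp (-2*A*x))
        = 1/(α * (1 + (p/q) * Real.exp (-(2*A*x)))) := by
      have he : Real.exp (-2*A*x) = Real.exp (-(2*A*x)) := by ring_nf
      rw [he]
      have hE := Real.exp_pos (-(2*A*x))
      have h1t : (0:ℝ) < 1 + (p/q) * Real.exp (-(2*A*x)) := by positivity
      have hden : (0:ℝ) < 2*α + σ₂^2 * p^2 * Real.exp (-(2*A*x)) := by positivity
      have hs : σ₂^2 * p^2 = 2*α*(p/q) := by
        rw [← hpq2a]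
        field_simp
      rw [div_eq_div_iff hden.ne' (by positivity), hs]
      field_simp
    have hcoef2 : 2 / (2*α + σ₂^2 * q^2 * Real.exp (2*A*x))
        = ((p/q) * Real.exp (-(2*A*x))) / (α * (1 + (p/q) * Real.exp (-(2*A*x)))) := by
      have hE := Real.exp_pos (-(2*A*x))
      have hinv : Real.exp (2*A*x) = (Real.exp (-(2*A*x)))⁻¹ := by
        rw [← Real.exp_neg]; ring_nf
      rw [hinv]
      have h1t : (0:ℝ) < 1 + (p/q) * Real.exp (-(2*A*x)) := by positivity
      have hden : (0:ℝ) < 2*α + σ₂^2 * q^2 * (Real.exp (-(2*A*x)))⁻¹ := by positivity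
      have hs : σ₂^2 * q^2 = 2*α*(q/p) := by
        rw [← hpq2a]
        field_simp
      rw [div_eq_div_iff hden.ne' (by positivity), hs]
      field_simp
      ring
    rw [hM₂ x, hcoef1, hcoef2, J_eq hh hC hC' hp0 x, J_eq hh hC hC' (lt_trans hp0
      (lt_trans hpl1 hl1q)) x]
    simp only [II]
  -- difference formula
  have hdiffeq : ∀ x, M₂ x - M₁ x
      = ((II h p x - II h l1 x)
          - ((p/q) * Real.exp (-(2*A*x))) * (II h l1 x - II h q x))
        / (α * (1 + (p/q) * Real.exp (-(2*A*x)))) := by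
    intro x
    have hE := Real.exp_pos (-(2*A*x))
    have h1t : (0:ℝ) < 1 + (p/q) * Real.exp (-(2*A*x)) := by positivity
    rw [hM1' x, hM2' x]
    field_simp
    ring
  -- the high-state side
  have hplusev : ∀ᶠ x in atTop, M₁ x < M₂ x := by
    have htvtend : Tendsto
        (fun x => ((p/q) * Real.exp (-(2*A*x))) * ((q-l1)/(l1-p))) atTop (nhds 0) := by
      have h1 : Tendsto (fun x : ℝ => -(2*A*x)) atTop atBot := by
        have := Tendsto.const_mul_atTop_of_neg (show -(2*A) < 0 by linarith)
          (tendsto_id (α := ℝ) (x := atTop))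
        simpa [neg_mul, mul_assoc] using this
      have h2 := Real.tendsto_exp_atBot.comp h1
      have := (h2.const_mul (p/q)).mul_const ((q-l1)/(l1-p))
      simpa using this
    filter_upwards [htvtend.eventually_lt_const zero_lt_one] with x hx
    have htvnn : 0 ≤ (p/q) * Real.exp (-(2*A*x)) := by positivity
    have hkey := plus_key hh hC' hd0 hmono hp0 hpl1 hl1q htvnn hx x
    rw [← sub_pos, hdiffeq x]
    apply div_pos (by linarith) (by positivity)
  -- the low-state side
  set θ := (max ((l1+p-q)/p) 0 + (q-p)/(l1-p))/2 with hθdef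
  have hU0 : 0 < (q-p)/(l1-p) := div_pos (by linarith) (by linarith)
  have hmax_lt : max ((l1+p-q)/p) 0 < (q-p)/(l1-p) := by
    apply max_lt _ hU0
    rw [div_lt_div_iff₀ hp0 (by linarith)]
    nlinarith [mul_pos hl10 (show (0:ℝ) < q - l1 by linarith)]
  have hθ0 : 0 < θ := by
    have := le_max_right ((l1+p-q)/p) 0
    rw [hθdef]; linarith
  have hθU : θ * (l1-p) < q-p := by
    have hθltU : θ < (q-p)/(l1-p) := by rw [hθdef]; linarith
    exact (lt_div_iff₀ (by linarith)).1 hθltU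
  have hθL : l1 + p - q < p*θ := by
    have hmaxθ : (l1+p-q)/p < θ := by
      have := le_max_left ((l1+p-q)/p) 0
      rw [hθdef]; linarith
    have := (div_lt_iff₀ hp0).1 hmaxθ
    linarith
  have hqml1 : 0 < 1 - Real.exp (-(q-l1)) := by
    have := Real.exp_lt_one_iff.2 (show -(q-l1) < 0 by linarith)
    linarith
  have hev1 : ∀ᶠ T in atTop, max 1 ((l1-p)/(q-l1)) * Real.exp (((l1-p)*θ)*T)
      ≤ ((1/2)*(p/q)) * Real.exp ((q-p)*T) :=
    ev_exp_le _ _ _ _ (by positivity) (by nlinarith)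
  have hev2 : ∀ᶠ T in atTop, (C'/p) * Real.exp ((-(p*θ))*T)
      < ((1/2)*(p/q) * Real.exp (-l1) * (1 - Real.exp (-(q-l1))) * (h 1 - h 0))
          * Real.exp ((q-p-l1)*T) := by
    apply ev_exp_lt
    · exact mul_pos (mul_pos (mul_pos (mul_pos (by norm_num : (0:ℝ) < 1/2)
        (div_pos hp0 hq0)) (Real.exp_pos _)) hqml1) hdl
    · linarith
  have hminusev : ∀ᶠ x in atBot, M₂ x < M₁ x := by
    have hcomp : Tendsto (fun x : ℝ => -x) atBot atTop := tendsto_neg_atBot_atTop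
    filter_upwards [hcomp.eventually hev1, hcomp.eventually hev2,
      eventually_le_atBot (-1:ℝ)] with x h1 h2 hx1
    set T := -x with hTdef
    have hT1 : 1 ≤ T := by rw [hTdef]; linarith
    have hE : Real.exp ((q-p)*T) = Real.exp (-(2*A*x)) := by
      congr 1; rw [hqp2A, hTdef]; ring
    have hc1 : max 1 ((l1-p)/(q-l1)) * Real.exp ((l1-p)*(θ*T))
        ≤ ((p/q) * Real.exp (-(2*A*x)))/2 := by
      have e1 : (l1-p)*(θ*T) = ((l1-p)*θ)*T := by ring
      rw [e1, ← hE]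
      linarith
    have hc2 : (C'/p) * Real.exp (-(p*(θ*T)))
        < ((p/q) * Real.exp (-(2*A*x)))/2
            * (Real.exp (-(l1*(T+1))) * (1 - Real.exp (-(q-l1))) * (h 1 - h 0)) := by
      have e1 : -(p*(θ*T)) = (-(p*θ))*T := by ring
      have e3 : Real.exp ((q-p)*T) * Real.exp (-(l1*(T+1)))
          = Real.exp ((q-p-l1)*T) * Real.exp (-l1) := by
        rw [← Real.exp_add, ← Real.exp_add]; congr 1; ring
      have e2 : ((p/q) * Real.exp (-(2*A*x)))/2
            * (Real.exp (-(l1*(T+1))) * (1 - Real.exp (-(q-l1))) * (h 1 - h 0))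
          = ((1/2)*(p/q) * Real.exp (-l1) * (1 - Real.exp (-(q-l1))) * (h 1 - h 0))
            * Real.exp ((q-p-l1)*T) := by
        rw [← hE]
        linear_combination ((1/2)*(p/q)*(1-Real.exp (-(q-l1)))*(h 1 - h 0)) * e3
      rw [e1, e2]
      exact h2
    have htvnn : 0 ≤ (p/q) * Real.exp (-(2*A*x)) := by positivity
    have hkey := minus_key hh hC' hd0 hmono hp0 hpl1 hl1q htvnn hθ0 hT1 hc1 hc2
    have hxT : -T = x := by rw [hTdef]; ring
    rw [hxT] at hkey
    have hE0 := Real.exp_pos (-(2*A*x))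
    have hfin : M₂ x - M₁ x < 0 := by
      rw [hdiffeq x]
      apply div_neg_of_neg_of_pos (by linarith) (by positivity)
    linarith
  obtain ⟨xp, hxp⟩ := Filter.eventually_atTop.1 hplusev
  obtain ⟨xm, hxm⟩ := Filter.eventually_atBot.1 hminusev
  exact ⟨xp, xm, fun x hx => hxp x hx.le, fun x hx => hxm x hx.le⟩
end

section
/- Let α, Γ, σ₁, σ₂ > 0 and let h : ℝ → ℝ be continuously differentiable, bounded, strictly increasing, with bounded derivative. Set A = √(2Γ)/σ₂, B = √(2(α+Γ))/σ₂, B₀ = √(2α)/σ₁, and define M¹(x) = (1/α)∫_0^∞ h(x + σ₁ z/√(2α)) e^{−z} dz and M²(x) = ρ₋(x)S₋(x) + ρ₊(x)S₊(x), where ρ₊(x) = 2/(2α + σ₂²(B+A)² e^{2Ax}), ρ₋(x) = 2/(2α + σ₂²(B−A)² e^{−2Ax}), S₊(x) = ∫_0^∞ h(x + s/(B+A)) e^{−s} ds, S₋(x) = ∫_0^∞ h(x + s/(B−A)) e^{−s} ds. Assume B − A < B₀ < B + A, and set K = ((B+A) − B₀)/(B₀ − (B−A)) and x₁ = (1/(2A))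 log( K σ₂² (B−A)² / (2α) ). Then for every x > x₁ one has M²(x) > M¹(x). -/
open MeasureTheory Set Filter Topology

/-- derivative of a monotone differentiable function is nonneg. -/
lemma mono_deriv_nonneg {f : ℝ → ℝ} (hf : Differentiable ℝ f) (hm : Monotone f) (t : ℝ) :
    0 ≤ deriv f t := by
  have h1 : Tendsto (slope f t) (𝓝[>] t) (𝓝 (deriv f t)) :=
    (hasDerivAt_iff_tendsto_slope.mp (hf t).hasDerivAt).mono_left
      (nhdsWithin_mono _ fun u hu => ne_of_gt hu)
  refine ge_of_tendsto h1 ?_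
  filter_upwards [self_mem_nhdsWithin] with u hu
  rw [slope_def_field]
  exact div_nonneg (sub_nonneg.2 (hm (le_of_lt hu))) (sub_nonneg.2 (le_of_lt hu))

lemma integrable_aux {φ : ℝ → ℝ} (hφ : Continuous φ) {C : ℝ} (hbd : ∀ y, |φ y| ≤ C)
    {c : ℝ} (hc : 0 < c) (x : ℝ) :
    IntegrableOn (fun u => φ (x + u) * Real.exp (-(c * u))) (Ioi (0:ℝ)) := by
  refine Integrable.mono' ((exp_neg_integrableOn_Ioi 0 hc).const_mul C) ?_ ?_
  · exact ((hφ.comp (continuous_const.add continuous_id)).mul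
      ((continuous_const.mul continuous_id).neg.rexp)).aestronglyMeasurable.restrict
  · refine ae_of_all _ fun u => ?_
    have : -(c * u) = -c * u := by ring
    rw [Real.norm_eq_abs, abs_mul, Real.abs_exp, this]
    exact mul_le_mul_of_nonneg_right (hbd _) (Real.exp_pos _).le

lemma gittins_key {h : ℝ → ℝ} (hh : ContDiff ℝ 1 h) {C C' : ℝ}
    (hC : ∀ y, |h y| ≤ C) (hC' : ∀ y, |deriv h y| ≤ C') (x : ℝ) {c : ℝ} (hc : 0 < c) :
    (∫ s in Ioi (0:ℝ), h (x + s / c) * Real.exp (-s))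
      = h x + ∫ u in Ioi (0:ℝ), deriv h (x + u) * Real.exp (-(c * u)) := by
  have hdiff : Differentiable ℝ h := hh.differentiable one_ne_zero
  have hcontd : Continuous (deriv h) := hh.continuous_deriv le_rfl
  have I1 : IntegrableOn (fun u => h (x + u) * Real.exp (-(c * u))) (Ioi (0:ℝ)) :=
    integrable_aux hdiff.continuous hC hc x
  have I2 : IntegrableOn (fun u => deriv h (x + u) * Real.exp (-(c * u))) (Ioi (0:ℝ)) :=
    integrable_aux hcontd hC' hc x
  have hsub : (∫ s in Ioi (0:ℝ), h (x + s / c) * Real.exp (-s))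
      = c * ∫ u in Ioi (0:ℝ), h (x + u) * Real.exp (-(c * u)) := by
    have h0 := integral_comp_mul_left_Ioi (fun s => h (x + s / c) * Real.exp (-s)) 0 hc
    simp only [mul_zero, smul_eq_mul] at h0
    have heq : (fun u : ℝ => h (x + c * u / c) * Real.exp (-(c * u)))
        = fun u : ℝ => h (x + u) * Real.exp (-(c * u)) := by
      funext u; rw [mul_div_cancel_left₀ _ (ne_of_gt hc)]
    rw [heq] at h0
    rw [h0, ← mul_assoc, mul_inv_cancel₀ (ne_of_gt hc), one_mul]
  set f : ℝ → ℝ := fun u => h (x + u) * Real.exp (-(c * u)) with hf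
  set f' : ℝ → ℝ := fun u =>
    deriv h (x + u) * Real.exp (-(c * u)) - c * (h (x + u) * Real.exp (-(c * u))) with hf'
  have hder : ∀ u : ℝ, HasDerivAt f (f' u) u := by
    intro u
    have H1 : HasDerivAt (fun u : ℝ => h (x + u)) (deriv h (x + u)) u := by
      have := (hdiff (x + u)).hasDerivAt.comp u ((hasDerivAt_id u).const_add x)
      exact this.congr_deriv (by ring)
    have H2 : HasDerivAt (fun u : ℝ => Real.exp (-(c * u))) (Real.exp (-(c * u)) * (-c)) u := by
      have : HasDerivAt (fun u : ℝ => -(c * u)) (-c) u := by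
        exact ((hasDerivAt_id u).const_mul c).neg.congr_deriv (by ring)
      exact (Real.hasDerivAt_exp _).comp u this
    have := H1.mul H2
    refine this.congr_deriv ?_
    simp only [hf']; ring
  have htend : Tendsto f atTop (𝓝 0) := by
    have h1 : Tendsto (fun u : ℝ => c * u) atTop atTop :=
      Tendsto.const_mul_atTop hc tendsto_id
    have h2 : Tendsto (fun u : ℝ => Real.exp (-(c * u))) atTop (𝓝 0) :=
      Real.tendsto_exp_atBot.comp (tendsto_neg_atBot_iff.mpr h1)
    have h3 : Tendsto (fun u : ℝ => C * Real.exp (-(c * u))) atTop (𝓝 0) := by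
      simpa using h2.const_mul C
    apply squeeze_zero_norm _ h3
    intro u
    show ‖h (x + u) * Real.exp (-(c * u))‖ ≤ C * Real.exp (-(c * u))
    rw [Real.norm_eq_abs, abs_mul, Real.abs_exp]
    exact mul_le_mul_of_nonneg_right (hC _) (Real.exp_pos _).le
  have hcont : ContinuousWithinAt f (Ici (0:ℝ)) 0 := (hder 0).continuousAt.continuousWithinAt
  have hint' : IntegrableOn f' (Ioi (0:ℝ)) := I2.sub (I1.const_mul c)
  have hibp := integral_Ioi_of_hasDerivAt_of_tendsto hcont (fun u _ => hder u) hint' htend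
  have hsplit : (∫ u in Ioi (0:ℝ), f' u)
      = (∫ u in Ioi (0:ℝ), deriv h (x + u) * Real.exp (-(c * u)))
        - c * ∫ u in Ioi (0:ℝ), h (x + u) * Real.exp (-(c * u)) := by
    simp only [hf']
    rw [integral_sub I2 (I1.const_mul c), integral_const_mul]
  have hf0 : f 0 = h x := by simp [hf]
  rw [hsplit, hf0] at hibp
  rw [hsub]
  linarith [hibp]

set_option maxHeartbeats 1000000 in
/-- Explicit upper threshold: above `x₁ = (1/(2A))log(Kσ₂²(B−A)²/(2α))` the
super-diffusive arm has the strictly larger Gittins index. -/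
theorem stmt14
    (α Γ σ₁ σ₂ : ℝ) (hα : 0 < α) (hΓ : 0 < Γ) (hσ₁ : 0 < σ₁) (hσ₂ : 0 < σ₂)
    (h : ℝ → ℝ) (hh : ContDiff ℝ 1 h) (hhb : ∃ C, ∀ x, |h x| ≤ C)
    (hmono : StrictMono h) (hhb' : ∃ C, ∀ x, |deriv h x| ≤ C)
    (A B B₀ : ℝ)
    (hA : A = Real.sqrt (2 * Γ) / σ₂)
    (hB : B = Real.sqrt (2 * (α + Γ)) / σ₂)
    (hB₀ : B₀ = Real.sqrt (2 * α) / σ₁)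
    (M₁ M₂ : ℝ → ℝ)
    (hM₁ : ∀ x, M₁ x =
      (1 / α) * ∫ z in Ioi (0 : ℝ), h (x + σ₁ * z / Real.sqrt (2 * α)) * Real.exp (-z))
    (hM₂ : ∀ x, M₂ x =
      (2 / (2 * α + σ₂ ^ 2 * (B - A) ^ 2 * Real.exp (-2 * A * x))) *
          (∫ s in Ioi (0 : ℝ), h (x + s / (B - A)) * Real.exp (-s))
        + (2 / (2 * α + σ₂ ^ 2 * (B + A) ^ 2 * Real.exp (2 * A * x))) *
          (∫ s in Ioi (0 : ℝ), h (x + s / (B + A)) * Real.exp (-s)))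
    (hlow : B - A < B₀) (hhigh : B₀ < B + A)
    (K x₁ : ℝ)
    (hK : K = ((B + A) - B₀) / (B₀ - (B - A)))
    (hx₁ : x₁ = (1 / (2 * A)) * Real.log (K * σ₂ ^ 2 * (B - A) ^ 2 / (2 * α))) :
    ∀ x, x₁ < x → M₁ x < M₂ x := by
  intro x hx
  obtain ⟨C, hC⟩ := hhb
  obtain ⟨C', hC'⟩ := hhb'
  have hdiff : Differentiable ℝ h := hh.differentiable one_ne_zero
  have hcontd : Continuous (deriv h) := hh.continuous_deriv le_rfl
  have h2Γ : (0:ℝ) < 2 * Γ := by linarith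
  have h2αΓ : (0:ℝ) < 2 * (α + Γ) := by linarith
  have h2α : (0:ℝ) < 2 * α := by linarith
  have hA0 : 0 < A := by rw [hA]; exact div_pos (Real.sqrt_pos.mpr h2Γ) hσ₂
  have hslts : Real.sqrt (2 * Γ) < Real.sqrt (2 * (α + Γ)) :=
    Real.sqrt_lt_sqrt h2Γ.le (by linarith)
  have hc1 : 0 < B - A := by
    rw [hA, hB, sub_pos]
    exact (div_lt_div_iff_of_pos_right hσ₂).mpr hslts
  have hc0 : 0 < B₀ := by rw [hB₀]; exact div_pos (Real.sqrt_pos.mpr h2α) hσ₁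
  have hc2 : 0 < B + A := by linarith
  have hp : 0 < B₀ - (B - A) := sub_pos.mpr hlow
  have hq : 0 < B + A - B₀ := sub_pos.mpr hhigh
  have hBsq : σ₂ ^ 2 * ((B - A) * (B + A)) = 2 * α := by
    have h1 : Real.sqrt (2 * (α + Γ)) ^ 2 = 2 * (α + Γ) := Real.sq_sqrt h2αΓ.le
    have h2 : Real.sqrt (2 * Γ) ^ 2 = 2 * Γ := Real.sq_sqrt h2Γ.le
    have hB2 : B ^ 2 = 2 * (α + Γ) / σ₂ ^ 2 := by rw [hB, div_pow, h1]
    have hA2 : A ^ 2 = 2 * Γ / σ₂ ^ 2 := by rw [hA, div_pow, h2]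
    have hσ : σ₂ ^ 2 ≠ 0 := by positivity
    calc σ₂ ^ 2 * ((B - A) * (B + A)) = σ₂ ^ 2 * (B ^ 2 - A ^ 2) := by ring
      _ = σ₂ ^ 2 * (2 * (α + Γ) / σ₂ ^ 2 - 2 * Γ / σ₂ ^ 2) := by rw [hB2, hA2]
      _ = 2 * α := by field_simp; ring
  -- rewrite M₁ and M₂ using the key identity
  have e₁ := gittins_key hh hC hC' x hc1
  have e₂ := gittins_key hh hC hC' x hc2
  have e₀ := gittins_key hh hC hC' x hc0
  have hM1' : M₁ x = (1 / α) *
      (h x + ∫ u in Ioi (0:ℝ), deriv h (x + u) * Real.exp (-(B₀ * u))) := by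
    have harg : ∀ z : ℝ, x + σ₁ * z / Real.sqrt (2 * α) = x + z / B₀ := by
      intro z; rw [hB₀, div_div_eq_mul_div]; ring
    rw [hM₁ x]
    simp only [harg]
    rw [e₀]
  have hM2' : M₂ x =
      (2 / (2 * α + σ₂ ^ 2 * (B - A) ^ 2 * Real.exp (-2 * A * x))) *
        (h x + ∫ u in Ioi (0:ℝ), deriv h (x + u) * Real.exp (-((B - A) * u)))
      + (2 / (2 * α + σ₂ ^ 2 * (B + A) ^ 2 * Real.exp (2 * A * x))) *
        (h x + ∫ u in Ioi (0:ℝ), deriv h (x + u) * Real.exp (-((B + A) * u))) := by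
    rw [hM₂ x, e₁, e₂]
  rw [hM1', hM2']
  set a := σ₂ ^ 2 * (B - A) ^ 2 * Real.exp (-2 * A * x) with ha
  set b := σ₂ ^ 2 * (B + A) ^ 2 * Real.exp (2 * A * x) with hb
  have ha0 : 0 < a := by rw [ha]; positivity
  have hb0 : 0 < b := by rw [hb]; positivity
  have hab : a * b = (2 * α) ^ 2 := by
    have hexp : Real.exp (-2 * A * x) * Real.exp (2 * A * x) = 1 := by
      rw [← Real.exp_add, show (-2 * A * x + 2 * A * x : ℝ) = 0 by ring, Real.exp_zero]
    calc a * b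
        = (σ₂ ^ 2 * ((B - A) * (B + A))) ^ 2 *
            (Real.exp (-2 * A * x) * Real.exp (2 * A * x)) := by rw [ha, hb]; ring
      _ = (2 * α) ^ 2 := by rw [hBsq, hexp, mul_one]
  set d1 := 2 * α + a with hd1def
  set d2 := 2 * α + b with hd2def
  have hd1 : 0 < d1 := by rw [hd1def]; linarith
  have hd2 : 0 < d2 := by rw [hd2def]; linarith
  have hprod : d1 * d2 = 2 * α * (d1 + d2) := by
    rw [hd1def, hd2def]; linear_combination hab
  have hsum : 2 / d1 + 2 / d2 = 1 / α := by
    rw [div_add_div _ _ (ne_of_gt hd1) (ne_of_gt hd2),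
      div_eq_div_iff (by positivity) (ne_of_gt hα)]
    linarith [hprod]
  -- the cross inequality p*d2 > q*d1
  have hK0 : 0 < K := by rw [hK]; exact div_pos hq hp
  have ht0 : 0 < K * σ₂ ^ 2 * (B - A) ^ 2 / (2 * α) := by positivity
  have hxexp : K * σ₂ ^ 2 * (B - A) ^ 2 / (2 * α) < Real.exp (2 * A * x) := by
    have h2A : (0:ℝ) < 2 * A := by linarith
    have h1 : Real.log (K * σ₂ ^ 2 * (B - A) ^ 2 / (2 * α)) < 2 * A * x := by
      rw [hx₁] at hx
      calc Real.log (K * σ₂ ^ 2 * (B - A) ^ 2 / (2 * α))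
          = 2 * A * ((1 / (2 * A)) * Real.log (K * σ₂ ^ 2 * (B - A) ^ 2 / (2 * α))) := by
            field_simp
        _ < 2 * A * x := mul_lt_mul_of_pos_left hx h2A
    calc K * σ₂ ^ 2 * (B - A) ^ 2 / (2 * α)
        = Real.exp (Real.log (K * σ₂ ^ 2 * (B - A) ^ 2 / (2 * α))) := (Real.exp_log ht0).symm
      _ < Real.exp (2 * A * x) := Real.exp_lt_exp.mpr h1
  have hkey1 : a * (B + A - B₀) < 2 * α * (B₀ - (B - A)) := by
    have hE : 0 < Real.exp (2 * A * x) := Real.exp_pos _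
    have hainv : a * Real.exp (2 * A * x) = σ₂ ^ 2 * (B - A) ^ 2 := by
      rw [ha, mul_assoc, ← Real.exp_add, show (-2 * A * x + 2 * A * x : ℝ) = 0 by ring,
        Real.exp_zero, mul_one]
    have h3 : 2 * α * (B₀ - (B - A)) * (K * σ₂ ^ 2 * (B - A) ^ 2 / (2 * α))
        = (B + A - B₀) * (σ₂ ^ 2 * (B - A) ^ 2) := by
      rw [hK]; field_simp
    have hstep := mul_lt_mul_of_pos_left hxexp
      (mul_pos h2α hp)
    have h4 : (a * (B + A - B₀)) * Real.exp (2 * A * x)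
        < (2 * α * (B₀ - (B - A))) * Real.exp (2 * A * x) := by
      calc (a * (B + A - B₀)) * Real.exp (2 * A * x)
          = (B + A - B₀) * (a * Real.exp (2 * A * x)) := by ring
        _ = (B + A - B₀) * (σ₂ ^ 2 * (B - A) ^ 2) := by rw [hainv]
        _ = 2 * α * (B₀ - (B - A)) * (K * σ₂ ^ 2 * (B - A) ^ 2 / (2 * α)) := h3.symm
        _ < (2 * α * (B₀ - (B - A))) * Real.exp (2 * A * x) := hstep
    exact lt_of_mul_lt_mul_right h4 hE.le
  have hcross : (B + A - B₀) * d1 < (B₀ - (B - A)) * d2 := by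
    rw [hd1def, hd2def]
    have hk2 := mul_lt_mul_of_pos_right hkey1 hb0
    have h5 : 2 * α * (2 * α * (B + A - B₀)) < 2 * α * ((B₀ - (B - A)) * b) := by
      calc 2 * α * (2 * α * (B + A - B₀)) = (2 * α) ^ 2 * (B + A - B₀) := by ring
        _ = a * b * (B + A - B₀) := by rw [hab]
        _ = a * (B + A - B₀) * b := by ring
        _ < 2 * α * (B₀ - (B - A)) * b := hk2
        _ = 2 * α * ((B₀ - (B - A)) * b) := by ring
    have h6 : 2 * α * (B + A - B₀) < (B₀ - (B - A)) * b := lt_of_mul_lt_mul_left h5 h2α.le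
    linarith [hkey1, h6]
  -- pointwise positivity of the kernel
  have hW : ∀ u : ℝ, 0 < u →
      (1 / α) * Real.exp (-(B₀ * u)) <
        2 / d1 * Real.exp (-((B - A) * u)) + 2 / d2 * Real.exp (-((B + A) * u)) := by
    intro u hu
    have hE0 : 0 < Real.exp (-(B₀ * u)) := Real.exp_pos _
    have e1 : Real.exp (-((B - A) * u))
        = Real.exp ((B₀ - (B - A)) * u) * Real.exp (-(B₀ * u)) := by
      rw [← Real.exp_add]; congr 1; ring
    have e2 : Real.exp (-((B + A) * u))
        = Real.exp (-((B + A - B₀) * u)) * Real.exp (-(B₀ * u)) := by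
      rw [← Real.exp_add]; congr 1; ring
    have l1 : (B₀ - (B - A)) * u + 1 < Real.exp ((B₀ - (B - A)) * u) :=
      Real.add_one_lt_exp (ne_of_gt (mul_pos hp hu))
    have l2 : -((B + A - B₀) * u) + 1 < Real.exp (-((B + A - B₀) * u)) :=
      Real.add_one_lt_exp (neg_ne_zero.mpr (ne_of_gt (mul_pos hq hu)))
    have hD1 : (0:ℝ) < 2 / d1 := by positivity
    have hD2 : (0:ℝ) < 2 / d2 := by positivity
    have r3 : 0 ≤ 2 / d1 * ((B₀ - (B - A)) * u) - 2 / d2 * ((B + A - B₀) * u) := by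
      rw [div_mul_eq_mul_div, div_mul_eq_mul_div, sub_nonneg, div_le_div_iff₀ hd2 hd1]
      linarith [mul_le_mul_of_nonneg_right hcross.le hu.le]
    have r1 := mul_lt_mul_of_pos_left l1 hD1
    have r2 := mul_lt_mul_of_pos_left l2 hD2
    have r4 : 2 / d1 + 2 / d2 <
        2 / d1 * Real.exp ((B₀ - (B - A)) * u) + 2 / d2 * Real.exp (-((B + A - B₀) * u)) := by
      linarith [r1, r2, r3]
    rw [e1, e2, ← hsum]
    linarith [mul_lt_mul_of_pos_right r4 hE0]
  -- integrability
  have I1i : IntegrableOn (fun u => deriv h (x + u) * Real.exp (-((B - A) * u))) (Ioi (0:ℝ)) :=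
    integrable_aux hcontd hC' hc1 x
  have I2i : IntegrableOn (fun u => deriv h (x + u) * Real.exp (-((B + A) * u))) (Ioi (0:ℝ)) :=
    integrable_aux hcontd hC' hc2 x
  have I0i : IntegrableOn (fun u => deriv h (x + u) * Real.exp (-(B₀ * u))) (Ioi (0:ℝ)) :=
    integrable_aux hcontd hC' hc0 x
  have hsub2 : (2 / d1 * (∫ u in Ioi (0:ℝ), deriv h (x + u) * Real.exp (-((B - A) * u)))
        + 2 / d2 * (∫ u in Ioi (0:ℝ), deriv h (x + u) * Real.exp (-((B + A) * u))))
        - 1 / α * (∫ u in Ioi (0:ℝ), deriv h (x + u) * Real.exp (-(B₀ * u)))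
      = ∫ u in Ioi (0:ℝ), (2 / d1 * (deriv h (x + u) * Real.exp (-((B - A) * u)))
          + 2 / d2 * (deriv h (x + u) * Real.exp (-((B + A) * u)))
          - 1 / α * (deriv h (x + u) * Real.exp (-(B₀ * u)))) := by
    have J1 : IntegrableOn (fun u => 2 / d1 * (deriv h (x + u) * Real.exp (-((B - A) * u))))
        (Ioi (0:ℝ)) := I1i.const_mul _
    have J2 : IntegrableOn (fun u => 2 / d2 * (deriv h (x + u) * Real.exp (-((B + A) * u))))
        (Ioi (0:ℝ)) := I2i.const_mul _
    have J0 : IntegrableOn (fun u => 1 / α * (deriv h (x + u) * Real.exp (-(B₀ * u))))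
        (Ioi (0:ℝ)) := I0i.const_mul _
    have J12 : IntegrableOn (fun u => 2 / d1 * (deriv h (x + u) * Real.exp (-((B - A) * u)))
        + 2 / d2 * (deriv h (x + u) * Real.exp (-((B + A) * u)))) (Ioi (0:ℝ)) := J1.add J2
    rw [integral_sub J12 J0, integral_add J1 J2,
      integral_const_mul, integral_const_mul, integral_const_mul]
  have hGnn : ∀ u ∈ Ioi (0:ℝ), 0 ≤ 2 / d1 * (deriv h (x + u) * Real.exp (-((B - A) * u)))
      + 2 / d2 * (deriv h (x + u) * Real.exp (-((B + A) * u)))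
      - 1 / α * (deriv h (x + u) * Real.exp (-(B₀ * u))) := by
    intro u hu
    have hd := mono_deriv_nonneg hdiff hmono.monotone (x + u)
    have hw := hW u hu
    have hrw : 2 / d1 * (deriv h (x + u) * Real.exp (-((B - A) * u)))
        + 2 / d2 * (deriv h (x + u) * Real.exp (-((B + A) * u)))
        - 1 / α * (deriv h (x + u) * Real.exp (-(B₀ * u)))
        = deriv h (x + u) * (2 / d1 * Real.exp (-((B - A) * u))
          + 2 / d2 * Real.exp (-((B + A) * u)) - 1 / α * Real.exp (-(B₀ * u))) := by ring
    rw [hrw]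
    exact mul_nonneg hd (by linarith)
  have hGint : IntegrableOn (fun u => 2 / d1 * (deriv h (x + u) * Real.exp (-((B - A) * u)))
      + 2 / d2 * (deriv h (x + u) * Real.exp (-((B + A) * u)))
      - 1 / α * (deriv h (x + u) * Real.exp (-(B₀ * u)))) (Ioi (0:ℝ)) :=
    ((I1i.const_mul _).add (I2i.const_mul _)).sub (I0i.const_mul _)
  have hpos : 0 < ∫ u in Ioi (0:ℝ), (2 / d1 * (deriv h (x + u) * Real.exp (-((B - A) * u)))
      + 2 / d2 * (deriv h (x + u) * Real.exp (-((B + A) * u)))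
      - 1 / α * (deriv h (x + u) * Real.exp (-(B₀ * u)))) := by
    rcases (setIntegral_nonneg measurableSet_Ioi hGnn).lt_or_eq with hlt | heq
    · exact hlt
    · exfalso
      have hae : (fun u => 2 / d1 * (deriv h (x + u) * Real.exp (-((B - A) * u)))
          + 2 / d2 * (deriv h (x + u) * Real.exp (-((B + A) * u)))
          - 1 / α * (deriv h (x + u) * Real.exp (-(B₀ * u))))
          =ᵐ[volume.restrict (Ioi (0:ℝ))] 0 :=
        (integral_eq_zero_iff_of_nonneg_ae
          ((ae_restrict_iff' measurableSet_Ioi).mpr (ae_of_all _ hGnn)) hGint).mp heq.symm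
      have hae' := (ae_restrict_iff' measurableSet_Ioi).mp hae
      have hae2 : ∀ᵐ u : ℝ, u ∈ Ioc (1:ℝ) 2 → deriv h (x + u) = 0 := by
        filter_upwards [hae'] with u h0 hu
        have hu' : u ∈ Ioi (0:ℝ) := lt_trans one_pos hu.1
        have hg := h0 hu'
        have hw := hW u hu'
        have hrw : 2 / d1 * (deriv h (x + u) * Real.exp (-((B - A) * u)))
            + 2 / d2 * (deriv h (x + u) * Real.exp (-((B + A) * u)))
            - 1 / α * (deriv h (x + u) * Real.exp (-(B₀ * u)))
            = deriv h (x + u) * (2 / d1 * Real.exp (-((B - A) * u))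
              + 2 / d2 * Real.exp (-((B + A) * u)) - 1 / α * Real.exp (-(B₀ * u))) := by ring
        simp only [Pi.zero_apply] at hg
        rw [hrw] at hg
        rcases mul_eq_zero.mp hg with h1 | h2
        · exact h1
        · exfalso; linarith
      have hzero2 : ∫ u in Ioc (1:ℝ) 2, deriv h (x + u) = 0 := by
        rw [setIntegral_congr_ae measurableSet_Ioc
          (hae2.mono fun u hu hmem => hu hmem)]
        simp
      have hFTC : ∫ u in (1:ℝ)..2, deriv h (x + u) = h (x + 2) - h (x + 1) := by
        rw [intervalIntegral.integral_comp_add_left (deriv h) x,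
          intervalIntegral.integral_deriv_eq_sub (fun t _ => hdiff t)
            (hcontd.intervalIntegrable _ _)]
      have hioc : ∫ u in (1:ℝ)..2, deriv h (x + u) = ∫ u in Ioc (1:ℝ) 2, deriv h (x + u) :=
        intervalIntegral.integral_of_le (by norm_num)
      have hlt2 : h (x + 1) < h (x + 2) := hmono (by linarith)
      rw [hFTC, hzero2] at hioc
      linarith
  -- assemble
  have hhx : 2 / d1 * h x + 2 / d2 * h x = 1 / α * h x := by rw [← add_mul, hsum]
  have hs : 1 / α * (∫ u in Ioi (0:ℝ), deriv h (x + u) * Real.exp (-(B₀ * u)))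
      < 2 / d1 * (∫ u in Ioi (0:ℝ), deriv h (x + u) * Real.exp (-((B - A) * u)))
        + 2 / d2 * (∫ u in Ioi (0:ℝ), deriv h (x + u) * Real.exp (-((B + A) * u))) := by
    linarith [hsub2, hpos]
  linarith [hhx, hs]
end

section
/- Let α, Γ, σ₁, σ₂ > 0 and let h : ℝ → ℝ be continuously differentiable, bounded, nondecreasing, with bounded derivative. Set A = √(2Γ)/σ₂, B = √(2(α+Γ))/σ₂, B₀ = √(2α)/σ₁, and define M¹(x) = (1/α)∫_0^∞ h(x + σ₁ z/√(2α)) e^{−z} dz and M²(x) = ρ₋(x)S₋(x) + ρ₊(x)S₊(x), where ρ₊(x) = 2/(2α + σ₂²(B+A)² e^{2Ax}), ρ₋(x) = 2/(2α + σ₂²(B−A)² e^{−2Ax}), S₊(x) = ∫_0^∞ h(x + s/(B+A)) e^{−s} ds, S₋(x) = ∫_0^∞ h(x + s/(B−A)) e^{−s} ds. If B₀ ≤ B − A (equivalently σ₂/σ₁ ≤ √(1+Γ/α) − √(Γ/α)), then M²(x) ≤ M¹(x) for every x ∈ ℝ. -/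
open MeasureTheory Set

/-!
Both indices are averages of `h` along rays `s ↦ x + c s` against the weight `e^{-s}`:
`M¹(x) = (1/α) I(σ₁/√(2α))` and `M²(x) = ρ₋ I(1/(B−A)) + ρ₊ I(1/(B+A))`. Since
`σ₂²(B² − A²) = 2α`, the two weights of `M²` satisfy `ρ₋ + ρ₊ = 1/α`, so `M²(x)` is a convex
combination (scaled by `1/α`) of the averages along slopes `1/(B+A) ≤ 1/(B−A) ≤ 1/B₀`. As `h` is
nondecreasing, `I(c)` is monotone in the slope `c`, which gives `M²(x) ≤ M¹(x)`.
-/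

noncomputable def expAverage (h : ℝ → ℝ) (x c : ℝ) : ℝ :=
  ∫ s in Ioi 0, h (x + c * s) * Real.exp (-s)

section ExpAverage

variable {h : ℝ → ℝ} {C : ℝ}

lemma integrableOn_comp_mul_exp_neg (hmeas : Measurable h) (hC : ∀ y, |h y| ≤ C) (x c : ℝ) :
    IntegrableOn (fun s => h (x + c * s) * Real.exp (-s)) (Ioi 0) :=
  (integrableOn_exp_neg_Ioi 0).bdd_mul (c := C)
    (hmeas.comp (by fun_prop)).aestronglyMeasurable
    (Filter.Eventually.of_forall fun s => hC (x + c * s))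

lemma expAverage_mono (hmono : Monotone h) (hC : ∀ y, |h y| ≤ C) (x : ℝ) :
    Monotone (expAverage h x) := by
  intro c₁ c₂ hc
  refine setIntegral_mono_on (integrableOn_comp_mul_exp_neg hmono.measurable hC x c₁)
    (integrableOn_comp_mul_exp_neg hmono.measurable hC x c₂) measurableSet_Ioi fun s hs => ?_
  have hray : x + c₁ * s ≤ x + c₂ * s := by
    gcongr
    exact le_of_lt hs
  exact mul_le_mul_of_nonneg_right (hmono hray) (Real.exp_pos _).le

lemma setIntegral_div_eq_expAverage (x b : ℝ) :
    ∫ s in Ioi 0, h (x + s / b) * Real.exp (-s) = expAverage h x b⁻¹ := by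
  simp only [expAverage, div_eq_inv_mul]

end ExpAverage

lemma two_div_add_two_div_eq_one_div {α u v : ℝ} (hα : 0 < α) (hu : 0 < u) (hv : 0 < v)
    (huv : u * v = 4 * α ^ 2) :
    2 / (2 * α + u) + 2 / (2 * α + v) = 1 / α := by
  field_simp
  nlinarith [huv]

lemma sq_mul_sq_sqrt_div {a σ : ℝ} (ha : 0 ≤ a) (hσ : σ ≠ 0) :
    σ ^ 2 * (Real.sqrt a / σ) ^ 2 = a := by
  rw [div_pow, Real.sq_sqrt ha]
  field_simp

lemma sub_sq_mul_exp_mul_add_sq_mul_exp {α σ A B : ℝ}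
    (hAB : σ ^ 2 * B ^ 2 - σ ^ 2 * A ^ 2 = 2 * α) (x : ℝ) :
    σ ^ 2 * (B - A) ^ 2 * Real.exp (-2 * A * x) * (σ ^ 2 * (B + A) ^ 2 * Real.exp (2 * A * x))
      = 4 * α ^ 2 := by
  have hexp : Real.exp (-2 * A * x) * Real.exp (2 * A * x) = 1 := by
    rw [← Real.exp_add]
    ring_nf
    exact Real.exp_zero
  calc _ = (σ ^ 2 * B ^ 2 - σ ^ 2 * A ^ 2) ^ 2 *
          (Real.exp (-2 * A * x) * Real.exp (2 * A * x)) := by ring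
    _ = 4 * α ^ 2 := by rw [hAB, hexp]; ring

theorem stmt15_general
    (α Γ σ₁ σ₂ : ℝ) (hα : 0 < α) (hΓ : 0 < Γ) (hσ₁ : 0 < σ₁) (hσ₂ : 0 < σ₂)
    (h : ℝ → ℝ) (hhb : ∃ C, ∀ x, |h x| ≤ C)
    (hmono : Monotone h)
    (A B B₀ : ℝ)
    (hA : A = Real.sqrt (2 * Γ) / σ₂)
    (hB : B = Real.sqrt (2 * (α + Γ)) / σ₂)
    (hB₀ : B₀ = Real.sqrt (2 * α) / σ₁)
    (M₁ M₂ : ℝ → ℝ)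
    (hM₁ : ∀ x, M₁ x =
      (1 / α) * ∫ z in Ioi (0 : ℝ), h (x + σ₁ * z / Real.sqrt (2 * α)) * Real.exp (-z))
    (hM₂ : ∀ x, M₂ x =
      (2 / (2 * α + σ₂ ^ 2 * (B - A) ^ 2 * Real.exp (-2 * A * x))) *
          (∫ s in Ioi (0 : ℝ), h (x + s / (B - A)) * Real.exp (-s))
        + (2 / (2 * α + σ₂ ^ 2 * (B + A) ^ 2 * Real.exp (2 * A * x))) *
          (∫ s in Ioi (0 : ℝ), h (x + s / (B + A)) * Real.exp (-s)))
    (hreg : B₀ ≤ B - A) :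
    ∀ x, M₂ x ≤ M₁ x := by
  intro x
  obtain ⟨C, hC⟩ := hhb
  have hA₀ : 0 ≤ A := by rw [hA]; positivity
  have hB₀pos : 0 < B₀ := by rw [hB₀]; positivity
  have hBA_sub : 0 < B - A := hB₀pos.trans_le hreg
  have hM₁' : M₁ x = 1 / α * expAverage h x B₀⁻¹ := by
    rw [hM₁, hB₀, inv_div, expAverage]
    simp only [mul_div_right_comm]
  have hAB : σ₂ ^ 2 * B ^ 2 - σ₂ ^ 2 * A ^ 2 = 2 * α := by
    rw [hB, hA, sq_mul_sq_sqrt_div (by positivity) hσ₂.ne',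
      sq_mul_sq_sqrt_div (by positivity) hσ₂.ne']
    ring
  have hBA_add : 0 < B + A := by linarith
  have hweights := two_div_add_two_div_eq_one_div hα (by positivity) (by positivity)
    (sub_sq_mul_exp_mul_add_sq_mul_exp hAB x)
  have hS_sub : expAverage h x (B - A)⁻¹ ≤ expAverage h x B₀⁻¹ :=
    expAverage_mono hmono hC x (inv_anti₀ hB₀pos hreg)
  have hS_add : expAverage h x (B + A)⁻¹ ≤ expAverage h x B₀⁻¹ :=
    expAverage_mono hmono hC x (inv_anti₀ hB₀pos (by linarith))
  rw [hM₂, hM₁', setIntegral_div_eq_expAverage, setIntegral_div_eq_expAverage, ← hweights,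
    add_mul]
  gcongr

/-- Region (a) of the phase diagram: if `B₀ ≤ B − A` then the Brownian arm has
the larger Gittins index at every state. -/
theorem stmt15
    (α Γ σ₁ σ₂ : ℝ) (hα : 0 < α) (hΓ : 0 < Γ) (hσ₁ : 0 < σ₁) (hσ₂ : 0 < σ₂)
    (h : ℝ → ℝ) (hh : ContDiff ℝ 1 h) (hhb : ∃ C, ∀ x, |h x| ≤ C)
    (hmono : Monotone h) (hhb' : ∃ C, ∀ x, |deriv h x| ≤ C)
    (A B B₀ : ℝ)
    (hA : A = Real.sqrt (2 * Γ) / σ₂)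
    (hB : B = Real.sqrt (2 * (α + Γ)) / σ₂)
    (hB₀ : B₀ = Real.sqrt (2 * α) / σ₁)
    (M₁ M₂ : ℝ → ℝ)
    (hM₁ : ∀ x, M₁ x =
      (1 / α) * ∫ z in Ioi (0 : ℝ), h (x + σ₁ * z / Real.sqrt (2 * α)) * Real.exp (-z))
    (hM₂ : ∀ x, M₂ x =
      (2 / (2 * α + σ₂ ^ 2 * (B - A) ^ 2 * Real.exp (-2 * A * x))) *
          (∫ s in Ioi (0 : ℝ), h (x + s / (B - A)) * Real.exp (-s))
        + (2 / (2 * α + σ₂ ^ 2 * (B + A) ^ 2 * Real.exp (2 * A * x))) *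
          (∫ s in Ioi (0 : ℝ), h (x + s / (B + A)) * Real.exp (-s)))
    (hreg : B₀ ≤ B - A) :
    ∀ x, M₂ x ≤ M₁ x :=
  stmt15_general α Γ σ₁ σ₂ hα hΓ hσ₁ hσ₂ h hhb hmono A B B₀ hA hB hB₀ M₁ M₂ hM₁ hM₂ hreg
end

section
/- Let α, Γ, σ₁, σ₂ > 0 and let h : ℝ → ℝ be continuously differentiable, bounded, nondecreasing, with bounded derivative. Set A = √(2Γ)/σ₂, B = √(2(α+Γ))/σ₂, B₀ = √(2α)/σ₁, and define M¹(x) = (1/α)∫_0^∞ h(x + σ₁ z/√(2α)) e^{−z} dz and M²(x) = ρ₋(x)S₋(x) + ρ₊(x)S₊(x), where ρ₊(x) = 2/(2α + σ₂²(B+A)² e^{2Ax}), ρ₋(x) = 2/(2α + σ₂²(B−A)² e^{−2Ax}), S₊(x) = ∫_0^∞ h(x + s/(B+A)) e^{−s} ds, S₋(x) = ∫_0^∞ h(x + s/(B−A)) e^{−s} ds. If B + A ≤ B₀ (equivalently σ₂/σ₁ ≥ √(1+Γ/α) + √(Γ/α)), then M²(x) ≥ M¹(x) for every x ∈ ℝ.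 -/
open MeasureTheory Set

lemma stmt16_integ (h : ℝ → ℝ) (hc : Continuous h) (C : ℝ) (hC : ∀ x, |h x| ≤ C)
    (x c : ℝ) :
    IntegrableOn (fun s => h (x + s / c) * Real.exp (-s)) (Ioi 0) := by
  have hexp : IntegrableOn (fun s : ℝ => Real.exp (-s)) (Ioi 0) := by
    simpa using exp_neg_integrableOn_Ioi 0 (by norm_num : (0:ℝ) < 1)
  apply Integrable.mono' (hexp.const_mul C)
  · exact ((hc.comp (by continuity)).mul (Real.continuous_exp.comp continuous_neg)).aestronglyMeasurable
  · filter_upwards with s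
    rw [Real.norm_eq_abs, abs_mul, abs_of_pos (Real.exp_pos _)]
    exact mul_le_mul_of_nonneg_right (hC _) (Real.exp_pos _).le

/-- Region (c) of the phase diagram: if `B + A ≤ B₀` then the super-diffusive arm has
the larger Gittins index at every state. -/
theorem stmt16
    (α Γ σ₁ σ₂ : ℝ) (hα : 0 < α) (hΓ : 0 < Γ) (hσ₁ : 0 < σ₁) (hσ₂ : 0 < σ₂)
    (h : ℝ → ℝ) (hh : ContDiff ℝ 1 h) (hhb : ∃ C, ∀ x, |h x| ≤ C)
    (hmono : Monotone h) (hhb' : ∃ C, ∀ x, |deriv h x| ≤ C)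
    (A B B₀ : ℝ)
    (hA : A = Real.sqrt (2 * Γ) / σ₂)
    (hB : B = Real.sqrt (2 * (α + Γ)) / σ₂)
    (hB₀ : B₀ = Real.sqrt (2 * α) / σ₁)
    (M₁ M₂ : ℝ → ℝ)
    (hM₁ : ∀ x, M₁ x =
      (1 / α) * ∫ z in Ioi (0 : ℝ), h (x + σ₁ * z / Real.sqrt (2 * α)) * Real.exp (-z))
    (hM₂ : ∀ x, M₂ x =
      (2 / (2 * α + σ₂ ^ 2 * (B - A) ^ 2 * Real.exp (-2 * A * x))) *
          (∫ s in Ioi (0 : ℝ), h (x + s / (B - A)) * Real.exp (-s))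
        + (2 / (2 * α + σ₂ ^ 2 * (B + A) ^ 2 * Real.exp (2 * A * x))) *
          (∫ s in Ioi (0 : ℝ), h (x + s / (B + A)) * Real.exp (-s)))
    (hreg : B + A ≤ B₀) :
    ∀ x, M₁ x ≤ M₂ x := by
  obtain ⟨C, hC⟩ := hhb
  have hc : Continuous h := hh.continuous
  intro x
  have h2α : (0:ℝ) < 2*α := by linarith
  have hs2α : (0:ℝ) < Real.sqrt (2*α) := Real.sqrt_pos.2 h2α
  have hB₀pos : 0 < B₀ := by rw [hB₀]; positivity
  have hApos : 0 < A := by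
    rw [hA]
    have : (0:ℝ) < Real.sqrt (2*Γ) := Real.sqrt_pos.2 (by linarith)
    positivity
  have hAB : A < B := by
    rw [hA, hB]
    apply div_lt_div_of_pos_right _ hσ₂
    exact Real.sqrt_lt_sqrt (by linarith) (by linarith)
  have hBmA : 0 < B - A := by linarith
  have hBpA : 0 < B + A := by linarith
  have hBmAB₀ : B - A ≤ B₀ := by linarith
  -- argument rewriting for M₁
  have harg : ∀ z : ℝ, x + σ₁ * z / Real.sqrt (2 * α) = x + z / B₀ := by
    intro z
    rw [hB₀]
    field_simp
  -- key algebraic identity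
  set p := σ₂ ^ 2 * (B - A) ^ 2 * Real.exp (-2 * A * x) with hp
  set q := σ₂ ^ 2 * (B + A) ^ 2 * Real.exp (2 * A * x) with hq
  have hppos : 0 < p := by positivity
  have hqpos : 0 < q := by positivity
  have hB2 : σ₂ ^ 2 * B ^ 2 = 2 * (α + Γ) := by
    rw [hB, div_pow, Real.sq_sqrt (by linarith)]
    field_simp
  have hA2 : σ₂ ^ 2 * A ^ 2 = 2 * Γ := by
    rw [hA, div_pow, Real.sq_sqrt (by linarith)]
    field_simp
  have hexp1 : Real.exp (-2 * A * x) * Real.exp (2 * A * x) = 1 := by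
    rw [← Real.exp_add]
    norm_num
  have hpq : p * q = 4 * α ^ 2 := by
    have : p * q = (σ₂ ^ 2 * B ^ 2 - σ₂ ^ 2 * A ^ 2) ^ 2
        * (Real.exp (-2 * A * x) * Real.exp (2 * A * x)) := by
      rw [hp, hq]; ring
    rw [this, hexp1, hB2, hA2]
    ring
  have hsum : 2 / (2 * α + p) + 2 / (2 * α + q) = 1 / α := by
    have h1 : 2 * α + p ≠ 0 := by positivity
    have h2 : 2 * α + q ≠ 0 := by positivity
    field_simp
    linear_combination -hpq
  -- integrals
  set S₁ := ∫ s in Ioi (0:ℝ), h (x + s / B₀) * Real.exp (-s) with hS₁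
  set Sm := ∫ s in Ioi (0:ℝ), h (x + s / (B - A)) * Real.exp (-s) with hSm
  set Sp := ∫ s in Ioi (0:ℝ), h (x + s / (B + A)) * Real.exp (-s) with hSp
  have hint₁ := stmt16_integ h hc C hC x B₀
  have hintm := stmt16_integ h hc C hC x (B - A)
  have hintp := stmt16_integ h hc C hC x (B + A)
  have hmono_int : ∀ c : ℝ, 0 < c → c ≤ B₀ →
      S₁ ≤ ∫ s in Ioi (0:ℝ), h (x + s / c) * Real.exp (-s) := by
    intro c hc0 hcB₀
    apply setIntegral_mono_on hint₁ (stmt16_integ h hc C hC x c) measurableSet_Ioi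
    intro s hs
    have hs0 : (0:ℝ) < s := hs
    have harg2 : x + s / B₀ ≤ x + s / c := by
      have : s / B₀ ≤ s / c := by gcongr
      linarith
    exact mul_le_mul_of_nonneg_right (hmono harg2) (Real.exp_pos _).le
  have hSm' : S₁ ≤ Sm := hmono_int (B - A) hBmA hBmAB₀
  have hSp' : S₁ ≤ Sp := hmono_int (B + A) hBpA hreg
  rw [hM₁ x, hM₂ x]
  simp only [harg]
  calc (1 / α) * S₁ = (2 / (2 * α + p)) * S₁ + (2 / (2 * α + q)) * S₁ := by
        rw [← add_mul, hsum]
    _ ≤ (2 / (2 * α + p)) * Sm + (2 / (2 * α + q)) * Sp := by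
        gcongr <;> positivity
end

section
/- Let α, Γ, σ₁, σ₂ > 0 and let h : ℝ → ℝ be continuous and bounded. Set A = √(2Γ)/σ₂, B = √(2(α+Γ))/σ₂, B₀ = √(2α)/σ₁, and define M¹(x) = (1/α)∫_0^∞ h(x + σ₁ z/√(2α)) e^{−z} dz and M²(x) = ρ₋(x)S₋(x) + ρ₊(x)S₊(x), where ρ₊(x) = 2/(2α + σ₂²(B+A)² e^{2Ax}), ρ₋(x) = 2/(2α + σ₂²(B−A)² e^{−2Ax}), S₊(x) = ∫_0^∞ h(x + s/(B+A)) e^{−s} ds, S₋(x) = ∫_0^∞ h(x + s/(B−A)) e^{−s} ds. Let h̃(s) = ∫_0^∞ h(u) e^{−su} du for s > 0 denote the Laplace transform of h restricted to [0,∞). Then M²(0) − M¹(0) = ( h̃(B−A) + h̃(B+A) ) / (σ₂² B) − (2/(σ₁² B₀)) h̃(B₀). -/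
open MeasureTheory Set

lemma stmt17_scale (h : ℝ → ℝ) {c : ℝ} (hc : 0 < c) :
    (∫ s in Ioi (0 : ℝ), h (s / c) * Real.exp (-s))
      = c * ∫ u in Ioi (0 : ℝ), h u * Real.exp (-c * u) := by
  have := integral_comp_mul_left_Ioi (fun s => h (s / c) * Real.exp (-s)) 0 hc
  simp only [mul_zero, smul_eq_mul] at this
  have h2 : (fun x : ℝ => h (c * x / c) * Real.exp (-(c * x)))
      = fun x : ℝ => h x * Real.exp (-c * x) := by
    funext x
    rw [mul_div_cancel_left₀ _ hc.ne', neg_mul]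
  rw [h2] at this
  rw [this]
  field_simp

set_option maxHeartbeats 1000000 in
/-- At the common starting point `0`, the Gittins-index difference of the two
arms is expressed through the Laplace transform of the reward. -/
theorem stmt17
    (α Γ σ₁ σ₂ : ℝ) (hα : 0 < α) (hΓ : 0 < Γ) (hσ₁ : 0 < σ₁) (hσ₂ : 0 < σ₂)
    (h : ℝ → ℝ) (hh : Continuous h) (hhb : ∃ C, ∀ x, |h x| ≤ C)
    (A B B₀ : ℝ)
    (hA : A = Real.sqrt (2 * Γ) / σ₂)
    (hB : B = Real.sqrt (2 * (α + Γ)) / σ₂)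
    (hB₀ : B₀ = Real.sqrt (2 * α) / σ₁)
    (M₁ M₂ : ℝ → ℝ)
    (hM₁ : ∀ x, M₁ x =
      (1 / α) * ∫ z in Ioi (0 : ℝ), h (x + σ₁ * z / Real.sqrt (2 * α)) * Real.exp (-z))
    (hM₂ : ∀ x, M₂ x =
      (2 / (2 * α + σ₂ ^ 2 * (B - A) ^ 2 * Real.exp (-2 * A * x))) *
          (∫ s in Ioi (0 : ℝ), h (x + s / (B - A)) * Real.exp (-s))
        + (2 / (2 * α + σ₂ ^ 2 * (B + A) ^ 2 * Real.exp (2 * A * x))) *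
          (∫ s in Ioi (0 : ℝ), h (x + s / (B + A)) * Real.exp (-s)))
    (ht : ℝ → ℝ)
    (hht : ∀ s, ht s = ∫ u in Ioi (0 : ℝ), h u * Real.exp (-s * u)) :
    M₂ 0 - M₁ 0
      = (ht (B - A) + ht (B + A)) / (σ₂ ^ 2 * B) - (2 / (σ₁ ^ 2 * B₀)) * ht B₀ := by
  have hσ₂2 : (0:ℝ) < σ₂ ^ 2 := by positivity
  have hA0 : 0 < A := by rw [hA]; positivity
  have hB0 : 0 < B := by rw [hB]; positivity
  have hB₀0 : 0 < B₀ := by rw [hB₀]; positivity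
  have hA2 : σ₂ ^ 2 * A ^ 2 = 2 * Γ := by
    rw [hA, div_pow, mul_div_cancel₀ _ (by positivity : (σ₂:ℝ)^2 ≠ 0)]
    exact Real.sq_sqrt (by positivity)
  have hB2 : σ₂ ^ 2 * B ^ 2 = 2 * (α + Γ) := by
    rw [hB, div_pow, mul_div_cancel₀ _ (by positivity : (σ₂:ℝ)^2 ≠ 0)]
    exact Real.sq_sqrt (by positivity)
  have hB₀2 : σ₁ ^ 2 * B₀ ^ 2 = 2 * α := by
    rw [hB₀, div_pow, mul_div_cancel₀ _ (by positivity : (σ₁:ℝ)^2 ≠ 0)]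
    exact Real.sq_sqrt (by positivity)
  have hBA : A < B := by
    by_contra hc
    push_neg at hc
    have h1 : B ^ 2 ≤ A ^ 2 := by nlinarith
    nlinarith
  have hBAm : 0 < B - A := by linarith
  have hBAp : 0 < B + A := by linarith
  have hSm : (∫ s in Ioi (0 : ℝ), h (0 + s / (B - A)) * Real.exp (-s))
      = (B - A) * ht (B - A) := by
    simp only [zero_add]
    rw [stmt17_scale h hBAm, hht (B - A)]
  have hSp : (∫ s in Ioi (0 : ℝ), h (0 + s / (B + A)) * Real.exp (-s))
      = (B + A) * ht (B + A) := by
    simp only [zero_add]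
    rw [stmt17_scale h hBAp, hht (B + A)]
  have hS₁ : (∫ z in Ioi (0 : ℝ), h (0 + σ₁ * z / Real.sqrt (2 * α)) * Real.exp (-z))
      = B₀ * ht B₀ := by
    have hs : Real.sqrt (2 * α) = σ₁ * B₀ := by
      rw [hB₀]; field_simp
    have heq : ∀ z : ℝ, (0 : ℝ) + σ₁ * z / Real.sqrt (2 * α) = z / B₀ := by
      intro z
      rw [hs, zero_add]
      field_simp
    simp only [heq]
    rw [stmt17_scale h hB₀0, hht B₀]
  rw [hM₂ 0, hM₁ 0, hSm, hSp, hS₁]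
  simp only [mul_zero, neg_mul, neg_zero, Real.exp_zero, mul_one]
  have hcm : 2 * α + σ₂ ^ 2 * (B - A) ^ 2 = σ₂ ^ 2 * (B - A) * (2 * B) := by
    nlinarith [hA2, hB2]
  have hcp : 2 * α + σ₂ ^ 2 * (B + A) ^ 2 = σ₂ ^ 2 * (B + A) * (2 * B) := by
    nlinarith [hA2, hB2]
  rw [hcm, hcp]
  have hBne : σ₂ ^ 2 * B ≠ 0 := by positivity
  have e1 : ∀ t : ℝ, 2 / (σ₂ ^ 2 * (B - A) * (2 * B)) * ((B - A) * t)
      = t / (σ₂ ^ 2 * B) := by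
    intro t
    field_simp
  have e2 : ∀ t : ℝ, 2 / (σ₂ ^ 2 * (B + A) * (2 * B)) * ((B + A) * t)
      = t / (σ₂ ^ 2 * B) := by
    intro t
    field_simp
  have e3 : ∀ t : ℝ, 1 / α * (B₀ * t) = 2 / (σ₁ ^ 2 * B₀) * t := by
    intro t
    have hα' : α = σ₁ ^ 2 * B₀ ^ 2 / 2 := by linarith
    rw [hα']
    field_simp
  rw [e1 (ht (B - A)), e2 (ht (B + A)), e3 (ht B₀)]
  ring
end

section
/- Let α, Γ, σ₁, σ₂ > 0 and let h : ℝ → ℝ be continuously differentiable, bounded, nondecreasing, with bounded derivative. Set A = √(2Γ)/σ₂, B = √(2(α+Γ))/σ₂, B₀ = √(2α)/σ₁, and assume B − A < B₀ < B + A. Define M¹, M², Δ = M² − M¹ as follows: M¹(x) = (1/α)∫_0^∞ h(x + σ₁ z/√(2α)) e^{−z} dz and M²(x) = ρ₋(x)S₋(x) + ρ₊(x)S₊(x), where ρ₊(x) = 2/(2α + σ₂²(B+A)² e^{2Ax}), ρ₋(x) = 2/(2α + σ₂²(B−A)² e^{−2Ax}), S₊(x) = ∫_0^∞ h(x + s/(B+A))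 e^{−s} ds, S₋(x) = ∫_0^∞ h(x + s/(B−A)) e^{−s} ds. Set K = ((B+A) − B₀)/(B₀ − (B−A)) and y(x) = (σ₂²(B−A)²/(2α)) e^{−2Ax}. Then for every x ∈ ℝ: α Δ(x) ≥ ((1 − K y(x))/(1 + y(x))) · ∫_0^∞ h'(x+u) ( e^{−(B−A)u} − e^{−B₀ u} ) du. -/
open MeasureTheory Set Filter Topology

open MeasureTheory Set Filter Topology

-- integrability of bounded continuous * exp decay
lemma aux_int {g : ℝ → ℝ} (hg : Continuous g) {C : ℝ} (hC : ∀ t, |g t| ≤ C)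
    {β : ℝ} (hβ : 0 < β) (x : ℝ) :
    IntegrableOn (fun u => g (x + u) * Real.exp (-β * u)) (Ioi (0:ℝ)) := by
  have h1 : IntegrableOn (fun u => C * Real.exp (-β * u)) (Ioi (0:ℝ)) :=
    (exp_neg_integrableOn_Ioi 0 hβ).const_mul C
  refine h1.mono' ?_ ?_
  · exact (((hg.comp (continuous_const.add continuous_id)).mul
      (Real.continuous_exp.comp (continuous_const.mul continuous_id)))).aestronglyMeasurable.restrict
  · filter_upwards with u
    rw [norm_mul, Real.norm_eq_abs, Real.norm_eq_abs, Real.abs_exp]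
    exact mul_le_mul_of_nonneg_right (hC _) (Real.exp_pos _).le

-- monotone differentiable ⇒ deriv nonneg
lemma aux_deriv_nonneg {h : ℝ → ℝ} (hdiff : Differentiable ℝ h) (hmono : Monotone h) (t : ℝ) :
    0 ≤ deriv h t := by
  have hd : HasDerivWithinAt h (deriv h t) (Ioi t) t :=
    (hdiff t).hasDerivAt.hasDerivWithinAt
  rw [hasDerivWithinAt_iff_tendsto_slope' (notMem_Ioi.2 le_rfl)] at hd
  refine ge_of_tendsto hd ?_
  filter_upwards [self_mem_nhdsWithin] with u hu
  have : t < u := hu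
  rw [slope_def_field]
  exact div_nonneg (sub_nonneg.2 (hmono this.le)) (by linarith)

lemma aux_ibp {h : ℝ → ℝ} (hh : ContDiff ℝ 1 h) {C C' : ℝ}
    (hC : ∀ t, |h t| ≤ C) (hC' : ∀ t, |deriv h t| ≤ C')
    {β : ℝ} (hβ : 0 < β) (x : ℝ) :
    β * ∫ u in Ioi (0:ℝ), h (x+u) * Real.exp (-β*u)
      = h x + ∫ u in Ioi (0:ℝ), deriv h (x+u) * Real.exp (-β*u) := by
  have hdiff : Differentiable ℝ h := hh.differentiable one_ne_zero
  have hint1 : IntegrableOn (fun u => h (x + u) * Real.exp (-β * u)) (Ioi (0:ℝ)) :=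
    aux_int hh.continuous hC hβ x
  have hint2 : IntegrableOn (fun u => deriv h (x + u) * Real.exp (-β * u)) (Ioi (0:ℝ)) :=
    aux_int (hh.continuous_deriv le_rfl) hC' hβ x
  set φ : ℝ → ℝ := fun u => -(h (x+u) * Real.exp (-β*u)) with hφ
  have hder : ∀ u ∈ Ioi (0:ℝ), HasDerivAt φ
      (β * (h (x+u) * Real.exp (-β*u)) - deriv h (x+u) * Real.exp (-β*u)) u := by
    intro u _
    have h1 : HasDerivAt (fun u : ℝ => h (x+u)) (deriv h (x+u)) u := by
      have h2 : HasDerivAt (fun u : ℝ => x + u) 1 u := by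
        simpa using (hasDerivAt_id u).const_add x
      have h5 := ((hdiff (x+u)).hasDerivAt.comp u h2); rw [mul_one] at h5; exact h5
    have h2 : HasDerivAt (fun u : ℝ => Real.exp (-β*u)) (-β * Real.exp (-β*u)) u := by
      have h3 : HasDerivAt (fun u : ℝ => -β * u) (-β) u := by
        simpa using (hasDerivAt_id u).const_mul (-β)
      simpa [mul_comm] using h3.exp
    have h4 : HasDerivAt φ (-(deriv h (x+u) * Real.exp (-β*u) + h (x+u) * (-β * Real.exp (-β*u)))) u := (h1.mul h2).neg
    convert h4 using 1
    ring
  have hφcont : ContinuousWithinAt φ (Ici (0:ℝ)) 0 := by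
    apply Continuous.continuousWithinAt
    exact ((hh.continuous.comp (continuous_const.add continuous_id)).mul
      (Real.continuous_exp.comp (continuous_const.mul continuous_id))).neg
  have htend : Tendsto φ atTop (𝓝 0) := by
    refine squeeze_zero_norm (a := fun u : ℝ => C * Real.exp (-β*u)) ?_ ?_
    · intro u
      simp only [hφ, norm_neg, norm_mul, Real.norm_eq_abs, Real.abs_exp]
      exact mul_le_mul_of_nonneg_right (hC _) (Real.exp_pos _).le
    · have h1 : Tendsto (fun u : ℝ => Real.exp (-(β*u))) atTop (𝓝 0) :=
        Real.tendsto_exp_neg_atTop_nhds_zero.comp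
          (Tendsto.const_mul_atTop hβ tendsto_id)
      have h2 := h1.const_mul C
      simpa [mul_zero, neg_mul] using h2
  have hintφ' : IntegrableOn (fun u => β * (h (x+u) * Real.exp (-β*u))
      - deriv h (x+u) * Real.exp (-β*u)) (Ioi (0:ℝ)) :=
    (hint1.const_mul β).sub hint2
  have key := integral_Ioi_of_hasDerivAt_of_tendsto hφcont hder hintφ' htend
  rw [integral_sub (hint1.const_mul β) hint2, integral_const_mul] at key
  have hφ0 : φ 0 = -(h x) := by simp [hφ]
  rw [hφ0] at key
  linarith [key]

lemma aux_conv3 {a b c u : ℝ} (hab : a < b) (hbc : b < c) (hu : 0 ≤ u) :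
    Real.exp (-b*u) - Real.exp (-c*u) ≤
      (c-b)/(b-a) * (Real.exp (-a*u) - Real.exp (-b*u)) := by
  have hca : (0:ℝ) < c - a := by linarith
  have hba : (0:ℝ) < b - a := by linarith
  have hl0 : 0 ≤ (c-b)/(c-a) := div_nonneg (by linarith) hca.le
  have hl1 : 0 ≤ 1 - (c-b)/(c-a) := by
    have : (c-b)/(c-a) ≤ 1 := (div_le_one hca).2 (by linarith)
    linarith
  have hconv := convexOn_exp.2 (Set.mem_univ (-a*u)) (Set.mem_univ (-c*u)) hl0 hl1 (by ring)
  simp only [smul_eq_mul] at hconv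
  have hx : (c-b)/(c-a) * (-a*u) + (1-(c-b)/(c-a)) * (-c*u) = -b*u := by
    field_simp
    ring
  rw [hx] at hconv
  have h2 := mul_le_mul_of_nonneg_left hconv hca.le
  have e1 : (c-a) * ((c-b)/(c-a)) = c - b := by field_simp
  have e2 : (c-a) * (1-(c-b)/(c-a)) = b - a := by field_simp; ring
  have h3 : (c-a) * Real.exp (-b*u) ≤
      (c-b) * Real.exp (-a*u) + (b-a) * Real.exp (-c*u) := by
    rw [mul_add, ← mul_assoc, ← mul_assoc, e1, e2] at h2
    exact h2
  rw [div_mul_eq_mul_div, le_div_iff₀ hba]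
  nlinarith [h3]

lemma aux_cov {h : ℝ → ℝ} {β : ℝ} (hβ : 0 < β) (x : ℝ) :
    ∫ s in Ioi (0:ℝ), h (x + s/β) * Real.exp (-s)
      = β * ∫ u in Ioi (0:ℝ), h (x+u) * Real.exp (-β*u) := by
  have key := integral_comp_mul_left_Ioi (fun s => h (x + s/β) * Real.exp (-s)) 0 hβ
  rw [mul_zero] at key
  have h2 : ∀ u : ℝ, h (x + (β*u)/β) * Real.exp (-(β*u)) = h (x+u) * Real.exp (-β*u) := by
    intro u
    rw [mul_div_cancel_left₀ _ hβ.ne']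
    ring_nf
  simp only [h2] at key
  rw [key, smul_eq_mul, ← mul_assoc, mul_inv_cancel₀ hβ.ne', one_mul]


set_option maxHeartbeats 1000000 in
/-- Key lower bound on the Gittins-index difference `Δ = M² − M¹` in the
intermediate parameter regime. -/
theorem stmt18
    (α Γ σ₁ σ₂ : ℝ) (hα : 0 < α) (hΓ : 0 < Γ) (hσ₁ : 0 < σ₁) (hσ₂ : 0 < σ₂)
    (h : ℝ → ℝ) (hh : ContDiff ℝ 1 h) (hhb : ∃ C, ∀ x, |h x| ≤ C)
    (hmono : Monotone h) (hhb' : ∃ C, ∀ x, |deriv h x| ≤ C)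
    (A B B₀ : ℝ)
    (hA : A = Real.sqrt (2 * Γ) / σ₂)
    (hB : B = Real.sqrt (2 * (α + Γ)) / σ₂)
    (hB₀ : B₀ = Real.sqrt (2 * α) / σ₁)
    (hlow : B - A < B₀) (hhigh : B₀ < B + A)
    (M₁ M₂ Δ : ℝ → ℝ)
    (hM₁ : ∀ x, M₁ x =
      (1 / α) * ∫ z in Ioi (0 : ℝ), h (x + σ₁ * z / Real.sqrt (2 * α)) * Real.exp (-z))
    (hM₂ : ∀ x, M₂ x =
      (2 / (2 * α + σ₂ ^ 2 * (B - A) ^ 2 * Real.exp (-2 * A * x))) *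
          (∫ s in Ioi (0 : ℝ), h (x + s / (B - A)) * Real.exp (-s))
        + (2 / (2 * α + σ₂ ^ 2 * (B + A) ^ 2 * Real.exp (2 * A * x))) *
          (∫ s in Ioi (0 : ℝ), h (x + s / (B + A)) * Real.exp (-s)))
    (hΔ : ∀ x, Δ x = M₂ x - M₁ x)
    (K : ℝ) (hK : K = ((B + A) - B₀) / (B₀ - (B - A)))
    (y : ℝ → ℝ)
    (hy : ∀ x, y x = σ₂ ^ 2 * (B - A) ^ 2 / (2 * α) * Real.exp (-2 * A * x)) :
    ∀ x,
      (1 - K * y x) / (1 + y x) *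
          (∫ u in Ioi (0 : ℝ),
            deriv h (x + u) * (Real.exp (-(B - A) * u) - Real.exp (-B₀ * u)))
        ≤ α * Δ x := by
  intro x
  obtain ⟨C, hC⟩ := hhb
  obtain ⟨C', hC'⟩ := hhb'
  have hdiff : Differentiable ℝ h := hh.differentiable one_ne_zero
  have hdc : Continuous (deriv h) := hh.continuous_deriv le_rfl
  have hdnn : ∀ t, 0 ≤ deriv h t := aux_deriv_nonneg hdiff hmono
  have hσ₂2 : (0:ℝ) < σ₂^2 := by positivity
  have hA2 : σ₂^2 * A^2 = 2*Γ := by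
    rw [hA, div_pow, Real.sq_sqrt (by linarith : (0:ℝ) ≤ 2*Γ)]
    field_simp
  have hB2 : σ₂^2 * B^2 = 2*(α+Γ) := by
    rw [hB, div_pow, Real.sq_sqrt (by linarith : (0:ℝ) ≤ 2*(α+Γ))]
    field_simp
  have hA0 : 0 < A := by
    rw [hA]; exact div_pos (Real.sqrt_pos.2 (by linarith)) hσ₂
  have hB0 : 0 ≤ B := by rw [hB]; positivity
  have hBA : A < B := by
    have hsq : σ₂^2*A^2 < σ₂^2*B^2 := by rw [hA2, hB2]; linarith
    have h6 : A^2 < B^2 := lt_of_mul_lt_mul_left hsq hσ₂2.le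
    exact lt_of_pow_lt_pow_left₀ 2 hB0 h6
  have ha : (0:ℝ) < B - A := by linarith
  have hb : (0:ℝ) < B₀ := by linarith
  have hc : (0:ℝ) < B + A := by linarith
  have hac : σ₂^2 * ((B-A)*(B+A)) = 2*α := by linear_combination hB2 - hA2
  -- integrability
  have hia : IntegrableOn (fun u => deriv h (x+u) * Real.exp (-(B-A)*u)) (Ioi (0:ℝ)) :=
    aux_int hdc hC' ha x
  have hib : IntegrableOn (fun u => deriv h (x+u) * Real.exp (-B₀*u)) (Ioi (0:ℝ)) :=
    aux_int hdc hC' hb x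
  have hic : IntegrableOn (fun u => deriv h (x+u) * Real.exp (-(B+A)*u)) (Ioi (0:ℝ)) :=
    aux_int hdc hC' hc x
  -- the two S-integrals and the M₁-integral
  have hSa : ∫ s in Ioi (0:ℝ), h (x + s/(B-A)) * Real.exp (-s)
      = h x + ∫ u in Ioi (0:ℝ), deriv h (x+u) * Real.exp (-(B-A)*u) := by
    rw [aux_cov ha x, aux_ibp hh hC hC' ha x]
  have hSc : ∫ s in Ioi (0:ℝ), h (x + s/(B+A)) * Real.exp (-s)
      = h x + ∫ u in Ioi (0:ℝ), deriv h (x+u) * Real.exp (-(B+A)*u) := by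
    rw [aux_cov hc x, aux_ibp hh hC hC' hc x]
  have hsqrt : Real.sqrt (2*α) ≠ 0 := ne_of_gt (Real.sqrt_pos.2 (by linarith))
  have hSb : ∫ z in Ioi (0:ℝ), h (x + σ₁ * z / Real.sqrt (2*α)) * Real.exp (-z)
      = h x + ∫ u in Ioi (0:ℝ), deriv h (x+u) * Real.exp (-B₀*u) := by
    have hrw : ∀ z : ℝ, x + σ₁ * z / Real.sqrt (2*α) = x + z / B₀ := by
      intro z
      rw [hB₀]
      field_simp
    simp_rw [hrw]
    rw [aux_cov hb x, aux_ibp hh hC hC' hb x]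
  -- key comparison of integrals
  have hmono2 : (∫ u in Ioi (0:ℝ),
        (deriv h (x+u) * Real.exp (-B₀*u) - deriv h (x+u) * Real.exp (-(B+A)*u)))
      ≤ ∫ u in Ioi (0:ℝ),
        K * (deriv h (x+u) * Real.exp (-(B-A)*u) - deriv h (x+u) * Real.exp (-B₀*u)) := by
    refine setIntegral_mono_on (hib.sub hic) ((hia.sub hib).const_mul K) measurableSet_Ioi ?_
    intro u hu
    have h1 := aux_conv3 hlow hhigh (le_of_lt (mem_Ioi.1 hu))
    have h2 := mul_le_mul_of_nonneg_left h1 (hdnn (x+u))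
    rw [hK]
    nlinarith [h2]
  rw [integral_sub hib hic, integral_const_mul, integral_sub hia hib] at hmono2
  -- rewrite the goal integral
  have hgoal_int : (∫ u in Ioi (0:ℝ),
        deriv h (x + u) * (Real.exp (-(B - A) * u) - Real.exp (-B₀ * u)))
      = (∫ u in Ioi (0:ℝ), deriv h (x+u) * Real.exp (-(B-A)*u))
        - ∫ u in Ioi (0:ℝ), deriv h (x+u) * Real.exp (-B₀*u) := by
    simp only [mul_sub]
    exact integral_sub hia hib
  -- abbreviations
  set Ia := ∫ u in Ioi (0:ℝ), deriv h (x+u) * Real.exp (-(B-A)*u) with hIa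
  set Ib := ∫ u in Ioi (0:ℝ), deriv h (x+u) * Real.exp (-B₀*u) with hIb
  set Ic := ∫ u in Ioi (0:ℝ), deriv h (x+u) * Real.exp (-(B+A)*u) with hIc
  -- numeric facts
  have hEE' : Real.exp (-2*A*x) * Real.exp (2*A*x) = 1 := by
    have e0 : (-2*A*x) + (2*A*x) = 0 := by ring
    rw [← Real.exp_add, e0, Real.exp_zero]
  have hy0 : 0 < y x := by
    rw [hy x]
    exact mul_pos (div_pos (mul_pos hσ₂2 (pow_pos ha 2)) (by linarith)) (Real.exp_pos _)
  have h1y : 0 < 1 + y x := by linarith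
  have hD1 : (0:ℝ) < 2 * α + σ₂ ^ 2 * (B - A) ^ 2 * Real.exp (-2 * A * x) := by
    have := Real.exp_pos (-2*A*x); positivity
  have hD2 : (0:ℝ) < 2 * α + σ₂ ^ 2 * (B + A) ^ 2 * Real.exp (2 * A * x) := by
    have := Real.exp_pos (2*A*x); positivity
  have key2 : σ₂^2*(B-A)^2*Real.exp (-2*A*x) * (2 * α + σ₂ ^ 2 * (B + A) ^ 2 * Real.exp (2 * A * x))
      = 2*α * (2 * α + σ₂ ^ 2 * (B - A) ^ 2 * Real.exp (-2 * A * x)) := by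
    linear_combination (σ₂^2*(B-A)*(B+A))^2 * hEE' + (σ₂^2*((B-A)*(B+A)) + 2*α) * hac
  have i1 : α * (2 / (2 * α + σ₂ ^ 2 * (B - A) ^ 2 * Real.exp (-2 * A * x)))
      = 1 / (1 + y x) := by
    have rhs_eq : (1:ℝ) / (1 + y x)
        = (2*α) / (2 * α + σ₂ ^ 2 * (B - A) ^ 2 * Real.exp (-2 * A * x)) := by
      rw [hy x, div_eq_div_iff (by positivity) hD1.ne']
      field_simp
    rw [rhs_eq, mul_div_assoc', div_eq_div_iff hD1.ne' hD1.ne']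
    ring
  have i2 : α * (2 / (2 * α + σ₂ ^ 2 * (B + A) ^ 2 * Real.exp (2 * A * x)))
      = y x / (1 + y x) := by
    have rhs_eq : y x / (1 + y x)
        = (σ₂^2*(B-A)^2*Real.exp (-2*A*x))
          / (2 * α + σ₂ ^ 2 * (B - A) ^ 2 * Real.exp (-2 * A * x)) := by
      rw [hy x, div_eq_div_iff (by positivity) hD1.ne']
      field_simp
    rw [rhs_eq, mul_div_assoc', div_eq_div_iff hD2.ne' hD1.ne']
    linear_combination -key2
  have hM1eq : α * M₁ x = h x + Ib := by
    rw [hM₁ x, hSb]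
    field_simp
  have hM2eq : α * M₂ x = (1/(1 + y x)) * (h x + Ia) + (y x/(1 + y x)) * (h x + Ic) := by
    rw [hM₂ x, hSa, hSc, mul_add, ← mul_assoc, ← mul_assoc, i1, i2]
  have hclean : α * Δ x * (1 + y x) = Ia - Ib + y x * (Ic - Ib) := by
    have h5 : α * Δ x = α * M₂ x - α * M₁ x := by rw [hΔ x]; ring
    rw [h5, hM2eq, hM1eq]
    field_simp
    ring
  rw [hgoal_int, div_mul_eq_mul_div, div_le_iff₀ h1y, hclean]
  have hfac : 0 ≤ y x * (K * (Ia - Ib) - (Ib - Ic)) :=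
    mul_nonneg hy0.le (by linarith [hmono2])
  nlinarith [hfac]
end

section
/- Let α, Γ, σ₁, σ₂ > 0 and let h : ℝ → ℝ be continuously differentiable, bounded, nondecreasing, with bounded derivative. Set A = √(2Γ)/σ₂, B = √(2(α+Γ))/σ₂, B₀ = √(2α)/σ₁, and assume B − A < B₀ < B + A. Define M¹, M², Δ = M² − M¹ as follows: M¹(x) = (1/α)∫_0^∞ h(x + σ₁ z/√(2α)) e^{−z} dz and M²(x) = ρ₋(x)S₋(x) + ρ₊(x)S₊(x), where ρ₊(x) = 2/(2α + σ₂²(B+A)² e^{2Ax}), ρ₋(x) = 2/(2α + σ₂²(B−A)² e^{−2Ax}), S₊(x) = ∫_0^∞ h(x + s/(B+A)) e^{−s} ds, S₋(x) = ∫_0^∞ h(x + s/(B−A)) e^{−s} ds. Set K = ((B+A) − B₀)/(B₀ − (B−A)) and y(x) = (σ₂²(B−A)²/(2α)) e^{−2Ax}. Then for every x ∈ ℝ: α Δ(x) ≤ ∫_0^∞ h'(x+u) ( e^{−(B−A)u} − e^{−B₀ u} ) · ((1 − K y(x) e^{−2Au})/(1 + y(x))) du. -/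
open MeasureTheory Set

lemma mono_deriv_nonneg_s19 {h : ℝ → ℝ} {t : ℝ} (hm : Monotone h) (hd : DifferentiableAt ℝ h t) :
    0 ≤ deriv h t := by
  have H := hd.hasDerivAt
  rw [hasDerivAt_iff_tendsto_slope] at H
  refine ge_of_tendsto H ?_
  filter_upwards [self_mem_nhdsWithin] with z hz
  have hs : slope h t z = (h z - h t) / (z - t) := slope_def_field h t z
  rcases lt_or_gt_of_ne (show z ≠ t from hz) with h1 | h1
  · rw [hs]
    exact div_nonneg_iff.mpr (Or.inr ⟨by simpa using hm h1.le, by linarith⟩)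
  · rw [hs]
    exact div_nonneg (by simpa using hm h1.le) (by linarith)

-- integrability of bounded-continuous times decaying exp
lemma intg_aux {g : ℝ → ℝ} (hg : Continuous g) {C : ℝ} (hC : ∀ t, |g t| ≤ C)
    {c : ℝ} (hc : 0 < c) :
    IntegrableOn (fun u => g u * Real.exp (-(c * u))) (Ioi (0:ℝ)) := by
  refine Integrable.mono' ((exp_neg_integrableOn_Ioi 0 hc).const_mul C) ?_ ?_
  · exact (hg.mul (Real.continuous_exp.comp (continuous_const.mul continuous_id).neg)).aestronglyMeasurable
  · refine ae_of_all _ fun u => ?_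
    have h1 : |g u| ≤ C := hC u
    have h2 : (0:ℝ) < Real.exp (-(c*u)) := Real.exp_pos _
    rw [Real.norm_eq_abs, abs_mul, abs_of_pos h2]
    have : Real.exp (-(c*u)) = Real.exp (-c * u) := by ring_nf
    rw [this]
    exact mul_le_mul_of_nonneg_right h1 (Real.exp_pos _).le

lemma Sval {h : ℝ → ℝ} (hh : ContDiff ℝ 1 h) {C : ℝ} (hC : ∀ t, |h t| ≤ C)
    {C' : ℝ} (hC' : ∀ t, |deriv h t| ≤ C') (x : ℝ) {c : ℝ} (hc : 0 < c) :
    ∫ s in Ioi (0:ℝ), h (x + s / c) * Real.exp (-s)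
      = h x + ∫ u in Ioi (0:ℝ), deriv h (x + u) * Real.exp (-(c * u)) := by
  have hdiff : Differentiable ℝ h := hh.differentiable one_ne_zero
  have hcont : Continuous h := hdiff.continuous
  have hderivc : Continuous (deriv h) := hh.continuous_deriv le_rfl
  -- substitution
  have sub1 : (∫ s in Ioi (0:ℝ), h (x + s / c) * Real.exp (-s))
      = c * ∫ u in Ioi (0:ℝ), h (x + u) * Real.exp (-(c * u)) := by
    have := integral_comp_mul_left_Ioi (fun s => h (x + s / c) * Real.exp (-s)) 0 hc
    simp only [mul_zero, smul_eq_mul] at this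
    have e : ∀ u : ℝ, h (x + c * u / c) * Real.exp (-(c * u))
        = h (x + u) * Real.exp (-(c * u)) := by
      intro u; rw [mul_div_cancel_left₀ _ hc.ne']
    simp_rw [e] at this
    rw [this]; field_simp
  -- derivative facts
  have hF : ∀ u : ℝ, HasDerivAt (fun v => h (x + v) * Real.exp (-(c * v)))
      (deriv h (x + u) * Real.exp (-(c * u)) - c * (h (x + u) * Real.exp (-(c * u)))) u := by
    intro u
    have h1 : HasDerivAt (fun v => h (x + v)) (deriv h (x + u)) u := by
      have := ((hdiff (x + u)).hasDerivAt).comp u ((hasDerivAt_id u).const_add x)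
      simpa [Function.comp_def] using this
    have h2 : HasDerivAt (fun v : ℝ => Real.exp (-(c * v))) (Real.exp (-(c * u)) * (-c)) u := by
      have hl : HasDerivAt (fun v : ℝ => -(c * v)) (-c) u := by
        have := ((hasDerivAt_id u).const_mul c).neg; simp only [mul_one] at this; exact this
      exact hl.exp
    have := h1.mul h2
    refine this.congr_deriv ?_; ring
  -- integrabilities
  have int1 : IntegrableOn (fun u => deriv h (x+u) * Real.exp (-(c*u))) (Ioi (0:ℝ)) :=
    intg_aux (hderivc.comp (continuous_const.add continuous_id)) (fun t => hC' (x+t)) hc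
  have int2 : IntegrableOn (fun u => h (x+u) * Real.exp (-(c*u))) (Ioi (0:ℝ)) :=
    intg_aux (hcont.comp (continuous_const.add continuous_id)) (fun t => hC (x+t)) hc
  have int3 : IntegrableOn (fun u => deriv h (x+u) * Real.exp (-(c*u))
      - c * (h (x+u) * Real.exp (-(c*u)))) (Ioi (0:ℝ)) := int1.sub (int2.const_mul c)
  -- limit
  have hlim : Filter.Tendsto (fun v => h (x + v) * Real.exp (-(c * v))) Filter.atTop (nhds 0) := by
    have hbnd : ∀ v, ‖h (x + v) * Real.exp (-(c * v))‖ ≤ C * Real.exp (-(c * v)) := by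
      intro v
      rw [Real.norm_eq_abs, abs_mul, abs_of_pos (Real.exp_pos _)]
      exact mul_le_mul_of_nonneg_right (hC _) (Real.exp_pos _).le
    have h1 : Filter.Tendsto (fun v : ℝ => -(c*v)) Filter.atTop Filter.atBot :=
      Filter.tendsto_neg_atTop_atBot.comp (Filter.tendsto_id.const_mul_atTop hc)
    have h2 := (Real.tendsto_exp_atBot.comp h1).const_mul C
    rw [mul_zero] at h2
    exact squeeze_zero_norm hbnd h2
  have ibp := integral_Ioi_of_hasDerivAt_of_tendsto
    ((hcont.comp (continuous_const.add continuous_id)).mul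
      (Real.continuous_exp.comp (continuous_const.mul continuous_id).neg)).continuousWithinAt
    (fun u _ => hF u) int3 hlim
  rw [integral_sub int1 (int2.const_mul c), MeasureTheory.integral_const_mul] at ibp
  simp only [mul_zero, Real.exp_zero, mul_one, zero_sub, Function.comp, id, add_zero, neg_zero, Pi.mul_apply, Pi.add_apply, Pi.neg_apply] at ibp
  rw [sub1]
  linarith

-- restated expineq with exp (-(a*u)) normal form
lemma expineq' (a b₀ b tA u : ℝ) (h1 : a < b₀) (h2 : b₀ < b)
    (htA : tA = b - a) (hu : 0 ≤ u) :
    (b - b₀) / (b₀ - a) * (Real.exp (-(tA * u)) * (Real.exp (-(a * u)) - Real.exp (-(b₀ * u)))) ≤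
      Real.exp (-(b₀ * u)) - Real.exp (-(b * u)) := by
  set p := b₀ - a with hp
  set q := b - b₀ with hq
  have hp0 : 0 < p := by simp only [hp]; linarith
  have hq0 : 0 < q := by simp only [hq]; linarith
  have key : q * (1 - Real.exp (-(p * u))) ≤ p * (Real.exp (q * u) - 1) := by
    have e1 := Real.add_one_le_exp (-(p * u))
    have e2 := Real.add_one_le_exp (q * u)
    nlinarith [mul_nonneg hp0.le hu, mul_nonneg hq0.le hu]
  have eL : Real.exp (-(tA * u)) * (Real.exp (-(a * u)) - Real.exp (-(b₀ * u)))
      = Real.exp (-(b * u)) * (1 - Real.exp (-(p * u))) := by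
    rw [mul_sub, mul_sub, ← Real.exp_add, ← Real.exp_add, ← Real.exp_add, mul_one]
    rw [htA, hp]; ring_nf
  have eR : Real.exp (-(b₀ * u)) - Real.exp (-(b * u))
      = Real.exp (-(b * u)) * (Real.exp (q * u) - 1) := by
    rw [mul_sub, ← Real.exp_add, mul_one, hq]; ring_nf
  rw [eL, eR, div_mul_eq_mul_div, div_le_iff₀ hp0]
  have hz := Real.exp_pos (-(b * u))
  nlinarith [mul_le_mul_of_nonneg_left key hz.le]
set_option maxHeartbeats 1000000

/-- Key upper bound on the Gittins-index difference `Δ = M² − M¹` in the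
intermediate parameter regime. -/
theorem stmt19
    (α Γ σ₁ σ₂ : ℝ) (hα : 0 < α) (hΓ : 0 < Γ) (hσ₁ : 0 < σ₁) (hσ₂ : 0 < σ₂)
    (h : ℝ → ℝ) (hh : ContDiff ℝ 1 h) (hhb : ∃ C, ∀ x, |h x| ≤ C)
    (hmono : Monotone h) (hhb' : ∃ C, ∀ x, |deriv h x| ≤ C)
    (A B B₀ : ℝ)
    (hA : A = Real.sqrt (2 * Γ) / σ₂)
    (hB : B = Real.sqrt (2 * (α + Γ)) / σ₂)
    (hB₀ : B₀ = Real.sqrt (2 * α) / σ₁)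
    (hlow : B - A < B₀) (hhigh : B₀ < B + A)
    (M₁ M₂ Δ : ℝ → ℝ)
    (hM₁ : ∀ x, M₁ x =
      (1 / α) * ∫ z in Ioi (0 : ℝ), h (x + σ₁ * z / Real.sqrt (2 * α)) * Real.exp (-z))
    (hM₂ : ∀ x, M₂ x =
      (2 / (2 * α + σ₂ ^ 2 * (B - A) ^ 2 * Real.exp (-2 * A * x))) *
          (∫ s in Ioi (0 : ℝ), h (x + s / (B - A)) * Real.exp (-s))
        + (2 / (2 * α + σ₂ ^ 2 * (B + A) ^ 2 * Real.exp (2 * A * x))) *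
          (∫ s in Ioi (0 : ℝ), h (x + s / (B + A)) * Real.exp (-s)))
    (hΔ : ∀ x, Δ x = M₂ x - M₁ x)
    (K : ℝ) (hK : K = ((B + A) - B₀) / (B₀ - (B - A)))
    (y : ℝ → ℝ)
    (hy : ∀ x, y x = σ₂ ^ 2 * (B - A) ^ 2 / (2 * α) * Real.exp (-2 * A * x)) :
    ∀ x,
      α * Δ x ≤
        ∫ u in Ioi (0 : ℝ),
          deriv h (x + u) * (Real.exp (-(B - A) * u) - Real.exp (-B₀ * u)) *
            ((1 - K * y x * Real.exp (-2 * A * u)) / (1 + y x)) := by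
  intro x
  obtain ⟨C, hC⟩ := hhb
  obtain ⟨C', hC'⟩ := hhb'
  have hdiff : Differentiable ℝ h := hh.differentiable one_ne_zero
  have hderivc : Continuous (deriv h) := hh.continuous_deriv le_rfl
  -- positivity facts
  have hA0 : 0 < A := by rw [hA]; positivity
  have ha0 : 0 < B - A := by
    rw [hB, hA, ← sub_div]
    have := Real.sqrt_lt_sqrt (by positivity : (0:ℝ) ≤ 2 * Γ)
      (by linarith : 2 * Γ < 2 * (α + Γ))
    exact div_pos (by linarith) hσ₂
  have hb0 : 0 < B + A := by linarith
  have hB₀0 : 0 < B₀ := by rw [hB₀]; positivity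
  have hc'0 : 0 < B₀ + 2 * A := by linarith
  have hprod : σ₂ ^ 2 * ((B - A) * (B + A)) = 2 * α := by
    have s1 : Real.sqrt (2 * (α + Γ)) ^ 2 = 2 * (α + Γ) := Real.sq_sqrt (by positivity)
    have s2 : Real.sqrt (2 * Γ) ^ 2 = 2 * Γ := Real.sq_sqrt (by positivity)
    have t2 : Real.sqrt 2 ^ 2 = 2 := Real.sq_sqrt (by norm_num)
    have tag : Real.sqrt (α + Γ) ^ 2 = α + Γ := Real.sq_sqrt (by positivity)
    have tg : Real.sqrt Γ ^ 2 = Γ := Real.sq_sqrt hΓ.le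
    rw [hA, hB]
    field_simp
    linear_combination s1 - s2
  set Y := y x with hYdef
  have hY0 : 0 < Y := by rw [hYdef, hy]; positivity
  have hY1 : (0:ℝ) < 1 + Y := by linarith
  have hK0 : 0 < K := by rw [hK]; exact div_pos (by linarith) (by linarith)
  have hee : Real.exp (-2 * A * x) * Real.exp (2 * A * x) = 1 := by
    rw [← Real.exp_add]; ring_nf; exact Real.exp_zero
  -- denominators
  have hden1 : 2 * α + σ₂ ^ 2 * (B - A) ^ 2 * Real.exp (-2 * A * x) = 2 * α * (1 + Y) := by
    rw [hYdef, hy]; field_simp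
  have hee' : Real.exp (-(A * 2 * x)) * Real.exp (A * 2 * x) = 1 := by
    rw [← Real.exp_add]; ring_nf; exact Real.exp_zero
  have hden2 : 2 * α + σ₂ ^ 2 * (B + A) ^ 2 * Real.exp (2 * A * x) = 2 * α * (1 + Y) / Y := by
    have hYe : Y * (σ₂ ^ 2 * (B + A) ^ 2 * Real.exp (2 * A * x)) = 2 * α := by
      rw [hYdef, hy]
      field_simp
      linear_combination (σ₂ ^ 2 * (B - A) ^ 2 * (B + A) ^ 2 * σ₂ ^ 2) * hee'
        + (σ₂ ^ 2 * ((B - A) * (B + A)) + 2 * α) * hprod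
    have h2 : σ₂ ^ 2 * (B + A) ^ 2 * Real.exp (2 * A * x) = 2 * α / Y := by
      rw [eq_div_iff hY0.ne']; linarith [hYe]
    rw [h2]
    field_simp
    ring
  -- the I integrals
  set g : ℝ → ℝ := fun u => deriv h (x + u) with hgdef
  have hgc : Continuous g := hderivc.comp (continuous_const.add continuous_id)
  have hgb : ∀ t, |g t| ≤ C' := fun t => hC' (x + t)
  have hgnn : ∀ u, 0 ≤ g u := fun u => mono_deriv_nonneg_s19 hmono (hdiff (x + u))
  set I : ℝ → ℝ := fun c => ∫ u in Ioi (0:ℝ), g u * Real.exp (-(c * u)) with hIdef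
  have hInt : ∀ c : ℝ, 0 < c → IntegrableOn (fun u => g u * Real.exp (-(c * u))) (Ioi (0:ℝ)) :=
    fun c hc => intg_aux hgc hgb hc
  -- M₁ value
  have hM1x : α * M₁ x = h x + I B₀ := by
    rw [hM₁]
    have hs : Real.sqrt (2 * α) ≠ 0 := by positivity
    have e : ∀ z : ℝ, x + σ₁ * z / Real.sqrt (2 * α) = x + z / B₀ := by
      intro z; rw [hB₀]; field_simp
    simp_rw [e]
    rw [Sval hh hC hC' x hB₀0]
    simp only [hIdef]
    field_simp
    simp only [hgdef, mul_comm]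
  -- M₂ value
  have hM2x : α * M₂ x = (1 / (1 + Y)) * (h x + I (B - A)) + (Y / (1 + Y)) * (h x + I (B + A)) := by
    rw [hM₂, Sval hh hC hC' x ha0, Sval hh hC hC' x hb0, hden1, hden2]
    simp only [hIdef]
    field_simp
    simp only [hgdef, mul_comm]
  -- LHS in closed form
  have hL : α * Δ x = (I (B - A) - I B₀ + Y * (I (B + A) - I B₀)) / (1 + Y) := by
    rw [hΔ, mul_sub, hM1x, hM2x]
    field_simp
    ring
  -- exp product identities
  have hexp1 : ∀ u : ℝ, Real.exp (-(2 * A * u)) * Real.exp (-((B - A) * u))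
      = Real.exp (-((B + A) * u)) := by
    intro u; rw [← Real.exp_add]; ring_nf
  have hexp2 : ∀ u : ℝ, Real.exp (-(2 * A * u)) * Real.exp (-(B₀ * u))
      = Real.exp (-((B₀ + 2 * A) * u)) := by
    intro u; rw [← Real.exp_add]; ring_nf
  -- RHS in closed form
  have hR : (∫ u in Ioi (0 : ℝ),
        deriv h (x + u) * (Real.exp (-(B - A) * u) - Real.exp (-B₀ * u)) *
          ((1 - K * Y * Real.exp (-2 * A * u)) / (1 + Y)))
      = (I (B - A) - I B₀ - K * Y * (I (B + A) - I (B₀ + 2 * A))) / (1 + Y) := by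
    have e : ∀ u : ℝ,
        deriv h (x + u) * (Real.exp (-(B - A) * u) - Real.exp (-B₀ * u)) *
          ((1 - K * Y * Real.exp (-2 * A * u)) / (1 + Y))
        = (1 / (1 + Y)) * ((g u * Real.exp (-((B - A) * u)) - g u * Real.exp (-(B₀ * u)))
            - K * Y * (g u * Real.exp (-((B + A) * u)) - g u * Real.exp (-((B₀ + 2 * A) * u)))) := by
      intro u
      have e1 := hexp1 u
      have e2 := hexp2 u
      have hn1 : Real.exp (-(B - A) * u) = Real.exp (-((B - A) * u)) := by ring_nf
      have hn2 : Real.exp (-B₀ * u) = Real.exp (-(B₀ * u)) := by ring_nf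
      have hn3 : Real.exp (-2 * A * u) = Real.exp (-(2 * A * u)) := by ring_nf
      rw [hn1, hn2, hn3]
      simp only [hgdef]
      linear_combination (-(deriv h (x + u) * K * Y) / (1 + Y)) * e1 + (deriv h (x + u) * K * Y / (1 + Y)) * e2
    have i1 : IntegrableOn (fun u => g u * Real.exp (-((B - A) * u)) - g u * Real.exp (-(B₀ * u))) (Ioi (0:ℝ)) :=
      (hInt _ ha0).sub (hInt _ hB₀0)
    have i2 : IntegrableOn (fun u => K * Y * (g u * Real.exp (-((B + A) * u)) - g u * Real.exp (-((B₀ + 2 * A) * u)))) (Ioi (0:ℝ)) :=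
      ((hInt _ hb0).sub (hInt _ hc'0)).const_mul _
    rw [integral_congr_ae (Filter.Eventually.of_forall fun u => e u)]
    rw [MeasureTheory.integral_const_mul,
      integral_sub i1 i2,
      integral_sub (hInt _ ha0) (hInt _ hB₀0), MeasureTheory.integral_const_mul,
      integral_sub (hInt _ hb0) (hInt _ hc'0)]
    simp only [hIdef]
    ring
  -- key integral inequality
  have hkey : I (B + A) - I B₀ + K * (I (B + A) - I (B₀ + 2 * A)) ≤ 0 := by
    have hle : ∫ u in Ioi (0:ℝ),
        ((g u * Real.exp (-((B + A) * u)) - g u * Real.exp (-(B₀ * u)))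
          + K * (g u * Real.exp (-((B + A) * u)) - g u * Real.exp (-((B₀ + 2 * A) * u)))) ≤ 0 := by
      apply integral_nonpos_of_ae
      rw [Filter.EventuallyLE, ae_restrict_iff' measurableSet_Ioi]
      refine ae_of_all _ fun u hu => ?_
      have hu0 : (0:ℝ) ≤ u := (le_of_lt hu)
      have hbr : Real.exp (-((B + A) * u)) - Real.exp (-(B₀ * u))
          + K * (Real.exp (-((B + A) * u)) - Real.exp (-((B₀ + 2 * A) * u))) ≤ 0 := by
        have hei := expineq' (B - A) B₀ (B + A) (2 * A) u hlow hhigh (by ring) hu0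
        rw [← hK] at hei
        have e1 := hexp1 u
        have e2 := hexp2 u
        nlinarith [hei]
      have := mul_nonneg (hgnn u) (neg_nonneg.2 hbr)
      simp only [Pi.zero_apply]
      nlinarith [this]
    have heq : ∫ u in Ioi (0:ℝ),
        ((g u * Real.exp (-((B + A) * u)) - g u * Real.exp (-(B₀ * u)))
          + K * (g u * Real.exp (-((B + A) * u)) - g u * Real.exp (-((B₀ + 2 * A) * u))))
        = I (B + A) - I B₀ + K * (I (B + A) - I (B₀ + 2 * A)) := by
      have i3 : IntegrableOn (fun u => g u * Real.exp (-((B + A) * u)) - g u * Real.exp (-(B₀ * u))) (Ioi (0:ℝ)) :=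
        (hInt _ hb0).sub (hInt _ hB₀0)
      have i4 : IntegrableOn (fun u => K * (g u * Real.exp (-((B + A) * u)) - g u * Real.exp (-((B₀ + 2 * A) * u)))) (Ioi (0:ℝ)) :=
        ((hInt _ hb0).sub (hInt _ hc'0)).const_mul _
      rw [integral_add i3 i4,
        integral_sub (hInt _ hb0) (hInt _ hB₀0), MeasureTheory.integral_const_mul,
        integral_sub (hInt _ hb0) (hInt _ hc'0)]
    rw [heq] at hle
    exact hle
  -- conclude
  rw [hL, hR]
  gcongr
  nlinarith [mul_nonneg hY0.le (neg_nonneg.2 hkey)]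
end
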